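/- arXiv:1307.3902 — 9 statements merged into one kernel-verified Lean document; each statement's English description precedes it below -/
import Mathlib

section
/- Let k, m be positive integers with m ≥ 5, and let b be a nonnegative even integer. Then E_{2^m k + b} - E_b ≡ 2^m k (7b^6 - 6b^5 - 11b^4 + 60b^3 - 13b^2 - 226b + 501 + 2^m k (b^4 + 2b^3 + 2b^2 + 3b + 15)) (mod 2^{m+10}). -/
/-!
Write `Δⁱ` for the `i`-th forward difference of `n ↦ E (2 n)` at `0`, so that
`E (2 n) = ∑ᵢ C(n, i) Δⁱ` (Newton). Substituted into the recurrence, this gives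
`∑ⱼ c(2N, j) Δʲ = 0`, where `c(n, j) = ∑ₗ C(n, 2l) C(l, j)` is the coefficient of `Xʲ` in
`Pₙ = ∑ₗ C(n, 2l) (X + 1)ˡ`. Pascal's rule gives `Pₙ₊₂ = 2 Pₙ₊₁ + X Pₙ`, whence `c(2N, N) = 1`
and `2^(2N - 2j - 1) ∣ c(2N, j)`, and induction on `N` gives `2^N ∣ Δᴺ`.

With `b = 2β` and `2^m k = 2H`, `E (2^m k + b) - E b = ∑ᵢ Δⁱ (C(H + β, i) - C(β, i))`. As
`u C(H, u) = H C(H - 1, u - 1)`, the factor `C(H + β, i) - C(β, i)` is divisible by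
`2^(m - 1 - log₂ i)`, so the terms with `i ≥ 8` vanish modulo `2^(m + 10)` (for `i ≤ 13` the
bound `2^i ∣ Δⁱ` is not enough, and the computed values of `Δⁱ` are used instead). The terms with
`i ≤ 7` form an explicit polynomial in `H` and `β`; its difference from the right-hand side,
multiplied by `7! = 2^4 · 315`, is a combination of `2^15 H`, `2^11 H²`, `2^7 H³`, `2^3 H⁴` and
`H⁵`, each divisible by `2^(m + 14)`.
-/

open Finset Polynomial

def EulerRecurrence (E : ℕ → ℤ) : Prop :=
  ∀ n : ℕ, 1 ≤ n → ∑ r ∈ range (n + 1), ((2 * n).choose (2 * r) : ℤ) * E (2 * r) = 0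

section EvenChooseSum

variable {R : Type*} [CommSemiring R]

def evenChooseSum (n : ℕ) (y : R) : R := ∑ l ∈ range (n + 1), (n.choose (2 * l) : R) * y ^ l

def oddChooseSum (n : ℕ) (y : R) : R := ∑ l ∈ range (n + 1), (n.choose (2 * l + 1) : R) * y ^ l

lemma oddChooseSum_succ (n : ℕ) (y : R) :
    oddChooseSum (n + 1) y = oddChooseSum n y + evenChooseSum n y := by
  simp only [oddChooseSum, evenChooseSum, Nat.choose_succ_succ', Nat.cast_add, add_mul,
    sum_add_distrib]
  rw [sum_range_succ, sum_range_succ _ (n + 1),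
    Nat.choose_eq_zero_of_lt (by omega : n < 2 * (n + 1) + 1),
    Nat.choose_eq_zero_of_lt (by omega : n < 2 * (n + 1))]
  simp [add_comm]

lemma evenChooseSum_succ (n : ℕ) (y : R) :
    evenChooseSum (n + 1) y = evenChooseSum n y + y * oddChooseSum n y := by
  have hn : evenChooseSum n y = ∑ l ∈ range (n + 2), (n.choose (2 * l) : R) * y ^ l := by
    rw [sum_range_succ, Nat.choose_eq_zero_of_lt (by omega : n < 2 * (n + 1))]
    simp [evenChooseSum]
  rw [hn, evenChooseSum, oddChooseSum, sum_range_succ', sum_range_succ' _ (n + 1), mul_sum]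
  simp only [mul_add, Nat.choose_succ_succ', Nat.cast_add, add_mul, sum_add_distrib]
  simp only [Nat.choose_zero_right, mul_zero, Nat.cast_one, pow_zero, pow_succ, mul_left_comm y,
    mul_comm _ y]
  abel

lemma evenChooseSum_add_two {R : Type*} [CommRing R] (n : ℕ) (y : R) :
    evenChooseSum (n + 2) y = 2 * evenChooseSum (n + 1) y + (y - 1) * evenChooseSum n y := by
  have h1 := evenChooseSum_succ (n + 1) y
  have h0 := evenChooseSum_succ n y
  rw [oddChooseSum_succ] at h1
  linear_combination h1 - h0

end EvenChooseSum

def evenChooseCoeff (n j : ℕ) : ℤ := ∑ l ∈ range (n + 1), (n.choose (2 * l) * l.choose j : ℤ)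

lemma coeff_evenChooseSum_X_add_one (n j : ℕ) :
    (evenChooseSum n (X + 1 : ℤ[X])).coeff j = evenChooseCoeff n j := by
  simp [evenChooseSum, evenChooseCoeff, coeff_X_add_one_pow]

lemma evenChooseCoeff_add_two_zero (n : ℕ) :
    evenChooseCoeff (n + 2) 0 = 2 * evenChooseCoeff (n + 1) 0 := by
  simp only [← coeff_evenChooseSum_X_add_one, evenChooseSum_add_two, add_sub_cancel_right]
  simp

lemma evenChooseCoeff_add_two_succ (n j : ℕ) :
    evenChooseCoeff (n + 2) (j + 1) =
      2 * evenChooseCoeff (n + 1) (j + 1) + evenChooseCoeff n j := by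
  simp only [← coeff_evenChooseSum_X_add_one, evenChooseSum_add_two, add_sub_cancel_right]
  simp

lemma evenChooseCoeff_eq_zero_of_lt {n j : ℕ} (h : n < 2 * j) : evenChooseCoeff n j = 0 := by
  refine sum_eq_zero fun l _ ↦ ?_
  rcases lt_or_ge l j with hl | hl
  · simp [Nat.choose_eq_zero_of_lt hl]
  · simp [Nat.choose_eq_zero_of_lt (by omega : n < 2 * l)]

lemma evenChooseCoeff_two_mul_self (N : ℕ) : evenChooseCoeff (2 * N) N = 1 := by
  induction N with
  | zero => simp [evenChooseCoeff]
  | succ N ih =>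
    rw [show 2 * (N + 1) = 2 * N + 2 by ring, evenChooseCoeff_add_two_succ, ih,
      evenChooseCoeff_eq_zero_of_lt (by omega)]
    simp

lemma two_pow_dvd_evenChooseCoeff (n j : ℕ) : 2 ^ (n - 2 * j - 1) ∣ evenChooseCoeff n j := by
  induction n using Nat.twoStepInduction generalizing j with
  | zero => simp
  | one => simp
  | more n ihn ihn1 =>
    have hdouble (j : ℕ) : 2 ^ (n + 2 - 2 * j - 1) ∣ 2 * evenChooseCoeff (n + 1) j := by
      refine (pow_dvd_pow 2 (by omega : _ ≤ n + 1 - 2 * j - 1 + 1)).trans ?_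
      rw [pow_succ']
      exact mul_dvd_mul_left 2 (ihn1 j)
    cases j with
    | zero => simpa only [evenChooseCoeff_add_two_zero] using hdouble 0
    | succ j =>
      rw [evenChooseCoeff_add_two_succ]
      exact dvd_add (hdouble _) ((pow_dvd_pow 2 (by omega)).trans (ihn j))

def evenDiff (E : ℕ → ℤ) (i : ℕ) : ℤ := (fwdDiff 1)^[i] (fun n ↦ E (2 * n)) 0

lemma eq_sum_choose_mul_evenDiff (E : ℕ → ℤ) {n K : ℕ} (h : n < K) :
    E (2 * n) = ∑ i ∈ range K, (n.choose i : ℤ) * evenDiff E i := by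
  have newton := shift_eq_sum_fwdDiff_iter 1 (fun m ↦ E (2 * m)) n 0
  simp only [zero_add, smul_eq_mul, mul_one, nsmul_eq_mul] at newton
  rw [newton]
  refine sum_subset (range_subset_range.2 h) fun i _ hi ↦ ?_
  rw [Nat.choose_eq_zero_of_lt (by simpa using hi)]
  simp

lemma sum_evenChooseCoeff_mul_evenDiff {E : ℕ → ℤ} (hE : EulerRecurrence E) {N : ℕ}
    (hN : 1 ≤ N) :
    ∑ j ∈ range (2 * N + 1), evenChooseCoeff (2 * N) j * evenDiff E j = 0 := by
  calc ∑ j ∈ range (2 * N + 1), evenChooseCoeff (2 * N) j * evenDiff E j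
      = ∑ l ∈ range (2 * N + 1), ((2 * N).choose (2 * l) : ℤ) *
          ∑ j ∈ range (2 * N + 1), (l.choose j : ℤ) * evenDiff E j := by
        simp only [evenChooseCoeff, sum_mul, mul_sum]
        rw [sum_comm]
        refine sum_congr rfl fun _ _ ↦ sum_congr rfl fun _ _ ↦ ?_
        ring
    _ = ∑ l ∈ range (2 * N + 1), ((2 * N).choose (2 * l) : ℤ) * E (2 * l) :=
        sum_congr rfl fun l hl ↦ by
          rw [eq_sum_choose_mul_evenDiff E (mem_range.1 hl)]
    _ = ∑ l ∈ range (N + 1), ((2 * N).choose (2 * l) : ℤ) * E (2 * l) := by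
        refine (sum_subset (range_subset_range.2 (by omega)) fun l _ hl ↦ ?_).symm
        rw [Nat.choose_eq_zero_of_lt (by simp at hl; omega)]
        simp
    _ = 0 := hE N hN

lemma two_pow_dvd_evenDiff {E : ℕ → ℤ} (hE : EulerRecurrence E) (N : ℕ) :
    2 ^ N ∣ evenDiff E N := by
  induction N using Nat.strong_induction_on with
  | _ N ih =>
  rcases Nat.eq_zero_or_pos N with rfl | hN
  · simp
  have hsum := sum_evenChooseCoeff_mul_evenDiff hE hN
  rw [← add_sum_erase _ _ (mem_range.2 (by omega : N < 2 * N + 1)), evenChooseCoeff_two_mul_self,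
    one_mul, add_eq_zero_iff_eq_neg] at hsum
  rw [hsum, dvd_neg]
  refine dvd_sum fun j hj ↦ ?_
  obtain ⟨hjN, -⟩ := mem_erase.1 hj
  rcases lt_or_gt_of_ne hjN with hlt | hgt
  · refine (pow_dvd_pow 2 (by omega : N ≤ (2 * N - 2 * j - 1) + j)).trans ?_
    rw [pow_add]
    exact mul_dvd_mul (two_pow_dvd_evenChooseCoeff _ _) (ih j hlt)
  · rw [evenChooseCoeff_eq_zero_of_lt (by omega), zero_mul]
    exact dvd_zero _

lemma evenDiff_eq_sum (E : ℕ → ℤ) (i : ℕ) :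
    evenDiff E i = ∑ k ∈ range (i + 1), (-1) ^ (i - k) * (i.choose k : ℤ) * E (2 * k) := by
  simp [evenDiff, fwdDiff_iter_eq_sum_shift]

lemma euler_values {E : ℕ → ℤ} (hE0 : E 0 = 1) (hE : EulerRecurrence E) :
    E 2 = -1 ∧ E 4 = 5 ∧ E 6 = -61 ∧ E 8 = 1385 ∧ E 10 = -50521 ∧ E 12 = 2702765 ∧
      E 14 = -199360981 ∧ E 16 = 19391512145 ∧ E 18 = -2404879675441 ∧
      E 20 = 370371188237525 ∧ E 22 = -69348874393137901 ∧ E 24 = 15514534163557086905 ∧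
      E 26 = -4087072509293123892361 := by
  have e1 := hE 1 (by norm_num)
  have e2 := hE 2 (by norm_num)
  have e3 := hE 3 (by norm_num)
  have e4 := hE 4 (by norm_num)
  have e5 := hE 5 (by norm_num)
  have e6 := hE 6 (by norm_num)
  have e7 := hE 7 (by norm_num)
  have e8 := hE 8 (by norm_num)
  have e9 := hE 9 (by norm_num)
  have e10 := hE 10 (by norm_num)
  have e11 := hE 11 (by norm_num)
  have e12 := hE 12 (by norm_num)
  have e13 := hE 13 (by norm_num)
  norm_num [sum_range_succ, Nat.choose_eq_descFactorial_div_factorial, hE0]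
    at e1 e2 e3 e4 e5 e6 e7 e8 e9 e10 e11 e12 e13
  refine ⟨?_, ?_, ?_, ?_, ?_, ?_, ?_, ?_, ?_, ?_, ?_, ?_, ?_⟩ <;> linarith

lemma evenDiff_values {E : ℕ → ℤ} (hE0 : E 0 = 1) (hE : EulerRecurrence E) :
    evenDiff E 1 = -2 ∧ evenDiff E 2 = 8 ∧ evenDiff E 3 = -80 ∧ evenDiff E 4 = 1664 ∧
      evenDiff E 5 = -58112 ∧ evenDiff E 6 = 3027968 ∧ evenDiff E 7 = -219392000 := by
  obtain ⟨h2, h4, h6, h8, h10, h12, h14, -⟩ := euler_values hE0 hE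
  refine ⟨?_, ?_, ?_, ?_, ?_, ?_, ?_⟩ <;>
    norm_num [evenDiff_eq_sum, sum_range_succ, Nat.choose_eq_descFactorial_div_factorial, hE0,
      h2, h4, h6, h8, h10, h12, h14]

lemma two_pow_fourteen_dvd_evenDiff {E : ℕ → ℤ} (hE0 : E 0 = 1) (hE : EulerRecurrence E)
    {i : ℕ} (hi8 : 8 ≤ i) (hi13 : i ≤ 13) : 2 ^ 14 ∣ evenDiff E i := by
  obtain ⟨h2, h4, h6, h8, h10, h12, h14, h16, h18, h20, h22, h24, h26⟩ := euler_values hE0 hE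
  interval_cases i <;>
    norm_num [evenDiff_eq_sum, sum_range_succ, Nat.choose_eq_descFactorial_div_factorial, hE0,
      h2, h4, h6, h8, h10, h12, h14, h16, h18, h20, h22, h24, h26]

lemma two_pow_dvd_two_pow_log_mul_choose {a H u i : ℕ} (hH : 2 ^ a ∣ H) (hu : u ≠ 0)
    (hui : u ≤ i) : 2 ^ a ∣ 2 ^ Nat.log 2 i * H.choose u := by
  have hmul : 2 ^ a ∣ u * H.choose u := by
    obtain ⟨u, rfl⟩ := Nat.exists_eq_succ_of_ne_zero hu
    rcases H with _ | H
    · simp [Nat.choose_zero_succ]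
    · rw [mul_comm, ← Nat.add_one_mul_choose_eq]
      exact hH.mul_right _
  obtain ⟨v, w, hw, rfl⟩ := Nat.exists_eq_two_pow_mul_odd hu
  have hv : v ≤ Nat.log 2 i :=
    Nat.le_log_of_pow_le one_lt_two ((Nat.le_mul_of_pos_right _ hw.pos).trans hui)
  rw [mul_right_comm, mul_comm] at hmul
  exact ((Nat.Coprime.pow_left a (Nat.coprime_two_left.2 hw)).dvd_of_dvd_mul_left hmul).trans
    (mul_dvd_mul_right (pow_dvd_pow 2 hv) _)

lemma two_pow_dvd_two_pow_log_mul_choose_add_sub {a H : ℕ} (hH : 2 ^ a ∣ H) (β i : ℕ) :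
    (2 : ℤ) ^ a ∣ 2 ^ Nat.log 2 i * (((H + β).choose i : ℤ) - β.choose i) := by
  rw [Nat.add_choose_eq,
    Nat.sum_antidiagonal_eq_sum_range_succ (fun u w ↦ H.choose u * β.choose w), sum_range_succ']
  push_cast
  simp only [Nat.choose_zero_right, Nat.cast_one, one_mul, Nat.sub_zero, add_sub_cancel_right,
    mul_sum]
  refine dvd_sum fun u hu ↦ ?_
  rw [← mul_assoc]
  exact dvd_mul_of_dvd_left (mod_cast two_pow_dvd_two_pow_log_mul_choose hH u.succ_ne_zero
    (mem_range.1 hu)) _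

lemma log_two_add_eleven_le {i : ℕ} (hi : 14 ≤ i) : Nat.log 2 i + 11 ≤ i := by
  have hpow : i < 2 ^ (i - 10) := by
    obtain ⟨j, rfl⟩ := Nat.exists_eq_add_of_le hi
    have := Nat.lt_two_pow_self (n := j)
    rw [show 14 + j - 10 = j + 4 by omega, pow_add]
    omega
  have := Nat.log_lt_of_lt_pow (by omega) hpow
  omega

lemma two_pow_dvd_evenDiff_mul_choose_add_sub {E : ℕ → ℤ} (hE0 : E 0 = 1)
    (hE : EulerRecurrence E) {M H : ℕ} (hH : 2 ^ M ∣ H) (β : ℕ) {i : ℕ} (hi : 8 ≤ i) :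
    (2 : ℤ) ^ (M + 11) ∣ evenDiff E i * (((H + β).choose i : ℤ) - β.choose i) := by
  have hD : (2 : ℤ) ^ (11 + Nat.log 2 i) ∣ evenDiff E i := by
    rcases le_or_gt i 13 with hi13 | hi13
    · rw [Nat.log_eq_of_pow_le_of_lt_pow (by omega : 2 ^ 3 ≤ i) (by omega)]
      exact two_pow_fourteen_dvd_evenDiff hE0 hE hi hi13
    · exact (pow_dvd_pow 2 (by have := log_two_add_eleven_le hi13; omega)).trans
        (two_pow_dvd_evenDiff hE i)
  obtain ⟨d, hd⟩ := hD
  obtain ⟨e, he⟩ := two_pow_dvd_two_pow_log_mul_choose_add_sub hH β i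
  exact ⟨d * e, by rw [hd]; linear_combination 2 ^ 11 * d * he⟩

lemma two_pow_add_fifteen_dvd {M : ℕ} (hM : 4 ≤ M) {h : ℤ} (hh : 2 ^ M ∣ h) (A B C D F : ℤ) :
    (2 : ℤ) ^ (M + 15) ∣
      2 ^ 15 * h * A + 2 ^ 11 * h ^ 2 * B + 2 ^ 7 * h ^ 3 * C + 2 ^ 3 * h ^ 4 * D + h ^ 5 * F := by
  obtain ⟨M, rfl⟩ := Nat.exists_eq_add_of_le' hM
  obtain ⟨k, rfl⟩ := hh
  exact ⟨k * A + 2 ^ M * k ^ 2 * B + 2 ^ (2 * M) * k ^ 3 * C + 2 ^ (3 * M) * k ^ 4 * D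
    + 2 ^ (4 * M + 1) * k ^ 5 * F, by ring⟩

lemma sum_range_eight_evenDiff_modEq {E : ℕ → ℤ} (hE0 : E 0 = 1) (hE : EulerRecurrence E)
    {M : ℕ} (hM : 4 ≤ M) (k β : ℕ) :
    ∑ i ∈ range 8, evenDiff E i * (((2 ^ M * k + β).choose i : ℤ) - β.choose i) ≡
      2 ^ (M + 1) * k * (7 * ((2 * β : ℕ) : ℤ) ^ 6 - 6 * ((2 * β : ℕ) : ℤ) ^ 5
        - 11 * ((2 * β : ℕ) : ℤ) ^ 4 + 60 * ((2 * β : ℕ) : ℤ) ^ 3 - 13 * ((2 * β : ℕ) : ℤ) ^ 2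
        - 226 * ((2 * β : ℕ) : ℤ) + 501 + 2 ^ (M + 1) * k * (((2 * β : ℕ) : ℤ) ^ 4
        + 2 * ((2 * β : ℕ) : ℤ) ^ 3 + 2 * ((2 * β : ℕ) : ℤ) ^ 2 + 3 * ((2 * β : ℕ) : ℤ) + 15))
      [ZMOD 2 ^ (M + 11)] := by
  obtain ⟨d1, d2, d3, d4, d5, d6, d7⟩ := evenDiff_values hE0 hE
  obtain ⟨q, hq⟩ := Int.even_mul_pred_self (β : ℤ)
  refine Int.ModEq.symm (Int.modEq_iff_dvd.2 ?_)
  refine (IsCoprime.pow_left (by norm_num : IsCoprime (2 : ℤ) 315)).dvd_of_dvd_mul_left ?_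
  rw [← mul_dvd_mul_iff_left (by norm_num : (2 : ℤ) ^ 4 ≠ 0), ← mul_assoc, ← pow_add,
    show 4 + (M + 11) = M + 15 by ring]
  -- The arguments are `7!` times the difference, expanded in powers of `h = 2^M k`; in the
  -- `h`-linear part, `2^15` only divides after `β^5 - β` is rewritten as `2q (β + 1)(β^2 + 1)`.
  refine (two_pow_add_fifteen_dvd hM (dvd_mul_right (2 ^ M) (k : ℤ))
    (-4900257 + 24830918 * β - 33064185 * β ^ 2 + 19907020 * β ^ 3 - 5907230 * β ^ 4
      - 47005 * β ^ 6 + 1695099 * q * (β + 1) * (β ^ 2 + 1))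
    (191865688 - 529027275 * β + 477771945 * β ^ 2 - 189033250 * β ^ 3 + 33899460 * β ^ 4
      - 2249625 * β ^ 5)
    (-2821478485 + 5096234920 * β - 3024529480 * β ^ 2 + 723191840 * β ^ 3 - 59990000 * β ^ 4)
    (20384939680 - 24196235840 * β + 8678302080 * β ^ 2 - 959840000 * β ^ 3)
    (-38713977344 + 27770566656 * β - 4607232000 * β ^ 2 + 4628427776 * (2 ^ M * k)
      - 1535744000 * (2 ^ M * k) * β - 219392000 * (2 ^ M * k) ^ 2)).trans (dvd_of_eq ?_)
  simp only [sum_range_succ, sum_range_zero, d1, d2, d3, d4, d5, d6, d7]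
  qify at hq ⊢
  simp only [Nat.cast_choose_eq_descPochhammer_div, descPochhammer_eval_eq_prod_range,
    prod_range_succ, prod_range_zero, Nat.factorial]
  push_cast
  linear_combination (-27772502016) * (2 ^ M * (k : ℚ)) * ((β : ℚ) + 1) * ((β : ℚ) ^ 2 + 1) * hq

theorem stmt_2_general (E : ℕ → ℤ) (hE0 : E 0 = 1)
    (hEsum : ∀ n : ℕ, 1 ≤ n →
      ∑ r ∈ Finset.range (n + 1), ((2 * n).choose (2 * r) : ℤ) * E (2 * r) = 0)
    (k m : ℕ) (hm : 5 ≤ m) (b : ℕ) (hb : 2 ∣ b) :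
    E (2 ^ m * k + b) - E b ≡
      2 ^ m * k * (7 * (b : ℤ) ^ 6 - 6 * (b : ℤ) ^ 5 - 11 * (b : ℤ) ^ 4
        + 60 * (b : ℤ) ^ 3 - 13 * (b : ℤ) ^ 2 - 226 * (b : ℤ) + 501
        + 2 ^ m * k * ((b : ℤ) ^ 4 + 2 * (b : ℤ) ^ 3 + 2 * (b : ℤ) ^ 2 + 3 * (b : ℤ) + 15))
      [ZMOD 2 ^ (m + 10)] := by
  obtain ⟨β, rfl⟩ := hb
  obtain ⟨M, rfl⟩ : ∃ M, m = M + 1 := ⟨m - 1, by omega⟩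
  set H := 2 ^ M * k
  have hsplit : E (2 ^ (M + 1) * k + 2 * β) - E (2 * β) =
      ∑ i ∈ range 8, evenDiff E i * (((H + β).choose i : ℤ) - β.choose i) +
        ∑ i ∈ Ico 8 (H + β + 8), evenDiff E i * (((H + β).choose i : ℤ) - β.choose i) := by
    rw [sum_range_add_sum_Ico _ (by omega), show 2 ^ (M + 1) * k + 2 * β = 2 * (H + β) by ring,
      eq_sum_choose_mul_evenDiff E (by omega : H + β < H + β + 8),
      eq_sum_choose_mul_evenDiff E (by omega : β < H + β + 8), ← sum_sub_distrib]
    simp only [mul_sub, mul_comm]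
  have htail : ∑ i ∈ Ico 8 (H + β + 8), evenDiff E i * (((H + β).choose i : ℤ) - β.choose i)
      ≡ 0 [ZMOD 2 ^ (M + 11)] :=
    Int.modEq_zero_iff_dvd.2 (dvd_sum fun i hi ↦ two_pow_dvd_evenDiff_mul_choose_add_sub hE0 hEsum
      (dvd_mul_right _ _) β (mem_Ico.1 hi).1)
  rw [hsplit, show M + 1 + 10 = M + 11 by ring]
  simpa using (sum_range_eight_evenDiff_modEq hE0 hEsum (by omega) k β).add htail

/-- congruence for Euler numbers `E_{2^m k + b}` with `b` even,
`m ≥ 5`, modulo `2^(m+10)`. -/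
theorem stmt_2 (E : ℕ → ℤ) (hE0 : E 0 = 1)
    (hEodd : ∀ n : ℕ, 1 ≤ n → E (2 * n - 1) = 0)
    (hEsum : ∀ n : ℕ, 1 ≤ n →
      ∑ r ∈ Finset.range (n + 1), ((2 * n).choose (2 * r) : ℤ) * E (2 * r) = 0)
    (k m : ℕ) (hk : 0 < k) (hm : 5 ≤ m) (b : ℕ) (hb : 2 ∣ b) :
    E (2 ^ m * k + b) - E b ≡
      2 ^ m * k * (7 * (b : ℤ) ^ 6 - 6 * (b : ℤ) ^ 5 - 11 * (b : ℤ) ^ 4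
        + 60 * (b : ℤ) ^ 3 - 13 * (b : ℤ) ^ 2 - 226 * (b : ℤ) + 501
        + 2 ^ m * k * ((b : ℤ) ^ 4 + 2 * (b : ℤ) ^ 3 + 2 * (b : ℤ) ^ 2 + 3 * (b : ℤ) + 15))
      [ZMOD 2 ^ (m + 10)] :=
  stmt_2_general E hE0 hEsum k m hm b hb
end

section
/- Let a be a nonzero integer, let k, m be positive integers, and let b be a nonnegative integer. Then E_{2^m k + b}^{(a)} - E_b^{(a)} ≡ 2^{m-1} k ∑_{r=1}^{8} C(2^{m-1}k - 1, r-1) ((-2)^r / r) A_r(a,b) (mod 2^{m + 13 + 9·ord_2(a)}), where the congruence is between rational numbers, meaning that the 2-adic valuation of the difference of the two sides is at least m + 13 + 9·ord_2(a). -/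
/-!
Let `F = ∑ E_n x^n / n!`. The recurrence says `F · cosh(ax) = e^{(1-a)x}`, so `Z = F e^{-x}`
equals `2 / (e^{2ax} + 1)`: it has integral Hurwitz coefficients and satisfies the Riccati equation
`Z' = aZ² - 2aZ`. Put `P = 1 - D²`. Then `Δ_r := b! [x^b] P^r F = ∑_i C(r,i) (-1)^i E_{2i+b}`
equals `2^r A_r` and, expanding `D^{2N} = (1 - P)^N`, `E_{2N+b} = ∑_r (-1)^r C(N,r) Δ_r`.

By the Riccati equation, `P` maps `B_t = (t!/2^t) e^x Z^{t+1}` to `4a` times an integral combination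
of `B_t, B_{t+1}, B_{t+2}`. As `F = B_0`, `P^r F` is `(4a)^r` times an integral combination of
`B_0, …, B_{2r}`, so `ord_2 Δ_r ≥ (2 + ord_2 a) r - max_{t ≤ 2r} s_2(t)`, where `s_2` is the
binary digit sum. For `N = 2^{m-1} k` we have `ord_2 C(N,r) ≥ m - 1 - ord_2 r`, and for `r ≥ 9`
these bounds make `C(N,r) Δ_r` divisible by `2^{m+13+9 ord_2 a}`. The terms with `r ≤ 8` are
`E_b` and the subtracted sum.
-/

open PowerSeries Finset
open scoped Nat

def PIntegral (p : ℕ) (q : ℚ) : Prop := ¬ p ∣ q.den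

theorem Nat.two_pow_digits_sum_le (t : ℕ) : 2 ^ (Nat.digits 2 t).sum ≤ t + 1 := by
  induction t using Nat.strong_induction_on with
  | _ t ih =>
    rcases Nat.eq_zero_or_pos t with rfl | ht
    · simp
    rw [Nat.digits_def' (by norm_num) ht, List.sum_cons, pow_add]
    have := ih (t / 2) (by omega)
    rcases Nat.mod_two_eq_zero_or_one t with h | h <;> rw [h] <;> simp only [pow_zero, pow_one] <;>
      omega

theorem Nat.pow_sub_padicValNat_dvd_choose {p n k r : ℕ} [Fact p.Prime] (hn : p ^ k ∣ n)
    (hr : r ≠ 0) : p ^ (k - padicValNat p r) ∣ n.choose r := by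
  rcases eq_or_ne (n.choose r) 0 with h | h
  · simp [h]
  have hdvd : p ^ k ∣ r * n.choose r := by
    obtain ⟨r, rfl⟩ := Nat.exists_eq_succ_of_ne_zero hr
    rcases n with _ | n
    · simp at h
    exact hn.trans ⟨n.choose r, by rw [mul_comm]; exact (Nat.add_one_mul_choose_eq n r).symm⟩
  have := (padicValNat_dvd_iff_le (mul_ne_zero hr h)).mp hdvd
  rw [padicValNat.mul hr h] at this
  exact (padicValNat_dvd_iff_le h).mpr (by omega)

theorem Nat.two_pow_dvd_factorial_mul_two_pow_digits_sum (t : ℕ) :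
    2 ^ t ∣ t ! * 2 ^ (Nat.digits 2 t).sum := by
  have hv : padicValNat 2 t ! = t - (Nat.digits 2 t).sum := by
    simpa using sub_one_mul_padicValNat_factorial (p := 2) t
  have := Nat.digit_sum_le 2 t
  calc 2 ^ t = 2 ^ padicValNat 2 t ! * 2 ^ (Nat.digits 2 t).sum := by
        rw [← pow_add, hv]; congr 1; omega
    _ ∣ _ := mul_dvd_mul_right pow_padicValNat_dvd _

-- Sharp at `r = 9`, `t = 15`, which is why small `r` are treated separately.
theorem Nat.digits_sum_add_padicValNat_add_fourteen_le {r t : ℕ} (hr : 9 ≤ r)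
    (ht : t ≤ 2 * r) :
    (Nat.digits 2 t).sum + padicValNat 2 r + 14 ≤ 2 * r := by
  set s := (Nat.digits 2 t).sum
  set ρ := padicValNat 2 r
  have hs : 2 ^ s ≤ 2 * r + 1 := (Nat.two_pow_digits_sum_le t).trans (by omega)
  have hρ : 2 ^ ρ ∣ r := pow_padicValNat_dvd
  rcases le_or_gt r 15 with hr15 | hr16
  · have hs4 : s ≤ 4 := by
      by_contra! h
      have := Nat.pow_le_pow_right two_pos h
      omega
    have hρ2 : ρ ≤ 2 := by
      by_contra! h
      have : 2 ^ 3 ∣ r := (pow_dvd_pow 2 h).trans hρ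
      omega
    have hρ0 : ρ = 0 ∨ 2 ∣ r := by
      rcases Nat.eq_zero_or_pos ρ with h | h
      · exact .inl h
      · exact .inr ((pow_dvd_pow 2 h).trans hρ)
    omega
  · have hgrowth : ∀ x, 2 ^ x ≤ 2 * r + 1 → x + 7 ≤ r := by
      intro x hx
      by_contra! h
      have h1 : x - 4 < 2 ^ (x - 4) := Nat.lt_two_pow_self
      have h2 : 2 ^ x = 2 ^ (x - 4) * 2 ^ 4 := by rw [← pow_add]; congr 1; omega
      omega
    have := hgrowth s hs
    have := hgrowth ρ ((Nat.le_of_dvd (by omega) hρ).trans (by omega))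
    omega

theorem Finset.sum_range_succ_one_add_neg_one_pow_mul {R : Type*} [CommRing R] (f : ℕ → R)
    (n : ℕ) :
    ∑ i ∈ range (n + 1), (1 + (-1) ^ i) * f i = 2 * ∑ j ∈ range (n / 2 + 1), f (2 * j) := by
  have hfilter : ∑ i ∈ range (n + 1), (1 + (-1) ^ i) * f i =
      ∑ i ∈ (range (n + 1)).filter Even, 2 * f i := by
    rw [sum_filter]
    refine sum_congr rfl fun i _ => ?_
    rcases Nat.even_or_odd i with h | h
    · simp [h, h.neg_one_pow, one_add_one_eq_two]
    · simp [Nat.not_even_iff_odd.mpr h, h.neg_one_pow]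
  have himage : (range (n + 1)).filter Even = (range (n / 2 + 1)).image (2 * ·) := by
    ext i
    simp only [mem_filter, mem_range, mem_image, Nat.even_iff]
    constructor
    · rintro ⟨h1, h2⟩
      exact ⟨i / 2, by omega, by omega⟩
    · rintro ⟨j, h1, rfl⟩
      omega
  rw [hfilter, himage, sum_image (fun x _ y _ h => by simpa using h), mul_sum]

theorem Module.End.one_sub_pow_apply {R M : Type*} [CommRing R] [AddCommGroup M] [Module R M]
    (T : Module.End R M) (n : ℕ) (x : M) :
    ((1 - T) ^ n) x = ∑ i ∈ range (n + 1), ((-1) ^ i * n.choose i : R) • (T ^ i) x := by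
  rw [← neg_add_eq_sub, (Commute.one_right (-T)).add_pow, LinearMap.sum_apply]
  refine sum_congr rfl fun i _ => ?_
  rw [← neg_one_smul R T, smul_pow, one_pow, mul_one, Module.End.mul_apply,
    Module.End.natCast_apply, LinearMap.smul_apply, map_nsmul, mul_smul, Nat.cast_smul_eq_nsmul,
    smul_comm]

namespace PowerSeries

theorem derivative_rescale_exp (c : ℚ) :
    d⁄dX ℚ (rescale c (exp ℚ)) = C c * rescale c (exp ℚ) := by
  ext n
  simp only [coeff_derivative, coeff_rescale, coeff_exp, coeff_C_mul, Nat.factorial_succ,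
    Algebra.algebraMap_self_apply]
  push_cast
  field_simp
  ring

theorem factorial_mul_coeff_mul (f g : ℚ⟦X⟧) (n : ℕ) :
    (n ! : ℚ) * coeff n (f * g) = ∑ i ∈ range (n + 1),
      n.choose i * ((i ! * coeff i f) * ((n - i)! * coeff (n - i) g)) := by
  rw [coeff_mul, Nat.sum_antidiagonal_eq_sum_range_succ_mk, mul_sum]
  refine sum_congr rfl fun i hi => ?_
  have h := Nat.choose_mul_factorial_mul_factorial (Nat.lt_succ_iff.mp (mem_range.mp hi))
  rw [← h]
  push_cast
  ring

def hurwitzSubring : Subring ℚ⟦X⟧ where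
  carrier := {f | ∀ n, ∃ w : ℤ, (n ! : ℚ) * coeff n f = w}
  mul_mem' {f g} hf hg n := by
    choose u hu using hf
    choose w hw using hg
    refine ⟨∑ i ∈ range (n + 1), n.choose i * (u i * w (n - i)), ?_⟩
    simp [factorial_mul_coeff_mul, hu, hw]
  one_mem' n :=
    ⟨if n = 0 then 1 else 0, by rcases eq_or_ne n 0 with rfl | h <;> simp [coeff_one, *]⟩
  add_mem' {f g} hf hg n := by
    obtain ⟨u, hu⟩ := hf n
    obtain ⟨w, hw⟩ := hg n
    exact ⟨u + w, by simp [mul_add, hu, hw]⟩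
  zero_mem' n := ⟨0, by simp⟩
  neg_mem' {f} hf n := by
    obtain ⟨u, hu⟩ := hf n
    exact ⟨-u, by simp [hu]⟩

theorem rescale_exp_mem_hurwitzSubring (z : ℤ) : rescale (z : ℚ) (exp ℚ) ∈ hurwitzSubring :=
  fun n => ⟨z ^ n, by
    simp only [coeff_rescale, coeff_exp, Algebra.algebraMap_self, one_div, map_inv₀, map_natCast,
      Int.cast_pow]
    field_simp⟩

theorem exp_mem_hurwitzSubring : exp ℚ ∈ hurwitzSubring := by
  simpa using rescale_exp_mem_hurwitzSubring 1

theorem derivative_pow_apply (j : ℕ) (f : ℚ⟦X⟧) :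
    ((d⁄dX ℚ : Module.End ℚ ℚ⟦X⟧) ^ j) f = (d⁄dX ℚ)^[j] f := by
  rw [Module.End.pow_apply]
  rfl

theorem derivative_intCast_mul (n : ℤ) (f : ℚ⟦X⟧) :
    d⁄dX ℚ (n * f) = n * d⁄dX ℚ f := by
  simp [Derivation.leibniz]

end PowerSeries

namespace GeneralizedEuler

noncomputable def differenceOp : Module.End ℚ ℚ⟦X⟧ :=
  1 - (d⁄dX ℚ : Module.End ℚ ℚ⟦X⟧) ^ 2

theorem differenceOp_apply (f : ℚ⟦X⟧) : differenceOp f = f - d⁄dX ℚ (d⁄dX ℚ f) := by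
  simp [differenceOp, sq]

noncomputable def scaledTerm (Z : ℚ⟦X⟧) (t : ℕ) : ℚ⟦X⟧ :=
  C ((t ! : ℚ) / 2 ^ t) * (exp ℚ * Z ^ (t + 1))

def scaledSpan (a : ℤ) (Z : ℚ⟦X⟧) (r : ℕ) : Submodule ℤ ℚ⟦X⟧ :=
  Submodule.span ℤ ((fun t => (4 * a) ^ r • scaledTerm Z t) '' Set.Iic (2 * r))

variable {a : ℤ} {Z : ℚ⟦X⟧}

theorem choose_mul_four_mul_pow_mul_factorial_div_mem_zmultiples {N j v r t : ℕ}
    (hN : 2 ^ j ∣ N) (ha : (2 : ℤ) ^ v ∣ a) (hr : 9 ≤ r) (ht : t ≤ 2 * r) (w : ℤ) :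
    (N.choose r : ℚ) * ((4 * a) ^ r * ((t ! / 2 ^ t) * w)) ∈
      AddSubgroup.zmultiples ((2 : ℚ) ^ (j + 14 + 9 * v)) := by
  -- The three factors have `ord_2` at least `j - ord_2 r`, at least `(2 + v) r`, and `-s_2(t)`.
  obtain ⟨c, hc⟩ := Nat.pow_sub_padicValNat_dvd_choose (r := r) hN (by omega)
  obtain ⟨a', rfl⟩ := ha
  obtain ⟨u, hu⟩ := Nat.two_pow_dvd_factorial_mul_two_pow_digits_sum t
  have hle := Nat.digits_sum_add_padicValNat_add_fourteen_le hr ht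
  set s := (Nat.digits 2 t).sum
  set ρ := padicValNat 2 r
  set e := j - ρ + 2 * r + v * r - s - (j + 14 + 9 * v)
  have hexp :
      (2 : ℚ) ^ (j + 14 + 9 * v) * 2 ^ e * 2 ^ s = 2 ^ (j - ρ) * 4 ^ r * (2 ^ v) ^ r := by
    have : 9 * v ≤ v * r := by nlinarith
    rw [← pow_mul, show (4 : ℚ) ^ r = 2 ^ (2 * r) by rw [pow_mul]; norm_num, ← pow_add,
      ← pow_add, ← pow_add, ← pow_add]
    congr 1
    omega
  refine AddSubgroup.mem_zmultiples_iff.mpr ⟨c * a' ^ r * u * w * 2 ^ e, ?_⟩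
  have hfac : (t ! : ℚ) = 2 ^ t * u / 2 ^ s := by
    rw [eq_div_iff (by positivity)]
    exact_mod_cast hu
  rw [hc, hfac, zsmul_eq_mul]
  push_cast
  field_simp
  linear_combination (c * a' ^ r * u * w : ℚ) * hexp

theorem choose_mul_factorial_mul_coeff_mem_zmultiples (hZ : Z ∈ hurwitzSubring) {N j v r : ℕ}
    (hN : 2 ^ j ∣ N) (ha : (2 : ℤ) ^ v ∣ a) (hr : 9 ≤ r) {f : ℚ⟦X⟧}
    (hf : f ∈ scaledSpan a Z r) (b : ℕ) :
    (N.choose r : ℚ) * (b ! * coeff b f) ∈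
      AddSubgroup.zmultiples ((2 : ℚ) ^ (j + 14 + 9 * v)) := by
  induction hf using Submodule.span_induction with
  | mem x hx =>
    obtain ⟨t, ht, rfl⟩ := hx
    obtain ⟨w, hw⟩ := mul_mem exp_mem_hurwitzSubring (pow_mem hZ (t + 1)) b
    convert choose_mul_four_mul_pow_mul_factorial_div_mem_zmultiples hN ha hr ht w using 1
    dsimp only
    rw [← hw, scaledTerm, map_zsmul, coeff_C_mul, zsmul_eq_mul]
    push_cast
    ring
  | zero => simp
  | add x y _ _ hx hy => simpa [mul_add] using add_mem hx hy
  | smul n x _ hx =>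
    rw [map_zsmul]
    simpa [zsmul_eq_mul, mul_left_comm] using zsmul_mem hx n

theorem derivative_eq_of_mul_rescale_exp_add_one_eq_two
    (hZ : Z * (rescale (2 * a : ℚ) (exp ℚ) + 1) = 2) :
    d⁄dX ℚ Z = a * Z ^ 2 - 2 * a * Z := by
  set U := rescale (2 * a : ℚ) (exp ℚ) + 1
  have hU : d⁄dX ℚ U = 2 * a * (U - 1) := by
    simp [U, derivative_rescale_exp, map_ofNat C]
  have hU0 : U ≠ 0 := fun h => by
    have := congrArg (coeff 0) h
    simp only [U, map_add, coeff_rescale, coeff_exp, coeff_one, map_zero] at this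
    norm_num at this
  have hdiff : d⁄dX ℚ Z * U + Z * (2 * a * (U - 1)) = 0 := by
    have := congrArg (d⁄dX ℚ) hZ
    rw [← map_ofNat C 2, derivative_C, Derivation.leibniz, hU, smul_eq_mul, smul_eq_mul] at this
    linear_combination this
  refine mul_right_cancel₀ hU0 ?_
  linear_combination hdiff - a * Z * hZ

section Riccati

variable (hR : d⁄dX ℚ Z = a * Z ^ 2 - 2 * a * Z)
include hR

theorem derivative_exp_mul_pow (s : ℕ) :
    d⁄dX ℚ (exp ℚ * Z ^ s) = ((1 - 2 * a * s : ℤ) : ℚ⟦X⟧) * (exp ℚ * Z ^ s)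
      + ((a * s : ℤ) : ℚ⟦X⟧) * (exp ℚ * Z ^ (s + 1)) := by
  rw [Derivation.leibniz, derivative_pow, hR, derivative_exp, smul_eq_mul, smul_eq_mul]
  rcases s with _ | s
  · simp
  · push_cast
    ring

theorem differenceOp_exp_mul_pow (s : ℕ) :
    differenceOp (exp ℚ * Z ^ s) =
      ((4 * a * s * (1 - a * s) : ℤ) : ℚ⟦X⟧) * (exp ℚ * Z ^ s)
      + ((2 * a * s * (2 * a * s + a - 1) : ℤ) : ℚ⟦X⟧) * (exp ℚ * Z ^ (s + 1))
      - ((a ^ 2 * s * (s + 1) : ℤ) : ℚ⟦X⟧) * (exp ℚ * Z ^ (s + 2)) := by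
  rw [differenceOp_apply, derivative_exp_mul_pow hR, map_add, derivative_intCast_mul,
    derivative_intCast_mul, derivative_exp_mul_pow hR, derivative_exp_mul_pow hR]
  push_cast
  ring

theorem differenceOp_scaledTerm (t : ℕ) :
    differenceOp (scaledTerm Z t) =
      (4 * a) • (((t + 1) * (1 - a * (t + 1)) : ℤ) • scaledTerm Z t
      + (a * (2 * t + 3) - 1) • scaledTerm Z (t + 1) - a • scaledTerm Z (t + 2)) := by
  have h1 := congrArg C (show (2 : ℚ) * ((t + 1)! / 2 ^ (t + 1)) = (t + 1) * (t ! / 2 ^ t) by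
    rw [Nat.factorial_succ]; push_cast; field_simp; ring)
  have h2 := congrArg C (show
      (4 : ℚ) * ((t + 2)! / 2 ^ (t + 2)) = (t + 1) * (t + 2) * (t ! / 2 ^ t) by
    rw [Nat.factorial_succ, Nat.factorial_succ]; push_cast; field_simp; ring)
  simp only [map_mul, map_add, map_ofNat, map_natCast, map_one] at h1 h2
  rw [scaledTerm, ← smul_eq_C_mul, map_smul, differenceOp_exp_mul_pow hR]
  simp only [scaledTerm, zsmul_eq_mul, smul_eq_C_mul]
  push_cast
  linear_combination (-2 * a * (2 * a * (t + 1) + a - 1) * (exp ℚ * Z ^ (t + 2))) * h1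
    + (a ^ 2 * (exp ℚ * Z ^ (t + 3))) * h2

theorem differenceOp_mem_scaledSpan {r : ℕ} {f : ℚ⟦X⟧} (hf : f ∈ scaledSpan a Z r) :
    differenceOp f ∈ scaledSpan a Z (r + 1) := by
  induction hf using Submodule.span_induction with
  | mem x hx =>
    obtain ⟨t, ht, rfl⟩ := hx
    have hmem :
        ∀ u ≤ 2 * r + 2, (4 * a) ^ (r + 1) • scaledTerm Z u ∈ scaledSpan a Z (r + 1) :=
      fun u hu => Submodule.subset_span ⟨u, by simpa [Set.mem_Iic, mul_add] using hu, rfl⟩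
    have ht : t ≤ 2 * r := ht
    have := sub_mem (add_mem (zsmul_mem (hmem t (by omega)) ((t + 1) * (1 - a * (t + 1))))
      (zsmul_mem (hmem (t + 1) (by omega)) (a * (2 * t + 3) - 1)))
      (zsmul_mem (hmem (t + 2) (by omega)) a)
    convert this using 1
    rw [map_zsmul, differenceOp_scaledTerm hR]
    module
  | zero => simp
  | add x y _ _ hx hy => rw [map_add]; exact add_mem hx hy
  | smul n x _ hx => rw [map_zsmul]; exact Submodule.smul_mem _ n hx

theorem differenceOp_pow_exp_mul_mem_scaledSpan (r : ℕ) :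
    (differenceOp ^ r) (exp ℚ * Z) ∈ scaledSpan a Z r := by
  induction r with
  | zero => exact Submodule.subset_span ⟨0, by simp, by simp [scaledTerm]⟩
  | succ r ih =>
    rw [pow_succ', Module.End.mul_apply]
    exact differenceOp_mem_scaledSpan hR ih

end Riccati

noncomputable def egf (E : ℕ → ℤ) : ℚ⟦X⟧ := mk fun n => (E n : ℚ) / n !

theorem egf_mem_hurwitzSubring (E : ℕ → ℤ) : egf E ∈ hurwitzSubring :=
  fun n => ⟨E n, by simp only [egf, coeff_mk]; field_simp⟩

theorem factorial_mul_coeff_iterate_derivative_egf (E : ℕ → ℤ) (j b : ℕ) :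
    (b ! : ℚ) * coeff b ((d⁄dX ℚ)^[j] (egf E)) = E (b + j) := by
  rw [coeff_iterate_derivative, egf, coeff_mk, ← Nat.factorial_mul_ascFactorial b j]
  push_cast
  field_simp

def iteratedDiff (E : ℕ → ℤ) (r b : ℕ) : ℤ :=
  ∑ i ∈ range (r + 1), (r.choose i : ℤ) * (-1) ^ i * E (2 * i + b)

theorem iteratedDiff_eq_factorial_mul_coeff (E : ℕ → ℤ) (r b : ℕ) :
    (iteratedDiff E r b : ℚ) = b ! * coeff b ((differenceOp ^ r) (egf E)) := by
  rw [differenceOp, Module.End.one_sub_pow_apply, map_sum, mul_sum, iteratedDiff]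
  push_cast
  refine sum_congr rfl fun i _ => ?_
  rw [← pow_mul, derivative_pow_apply, map_smul, smul_eq_mul, mul_left_comm,
    factorial_mul_coeff_iterate_derivative_egf, add_comm b]
  ring

theorem euler_eq_sum_choose_mul_iteratedDiff (E : ℕ → ℤ) (N b : ℕ) :
    E (2 * N + b) = ∑ r ∈ range (N + 1), (-1) ^ r * N.choose r * iteratedDiff E r b := by
  have hD : (d⁄dX ℚ : Module.End ℚ ℚ⟦X⟧) ^ 2 = 1 - differenceOp := by
    rw [differenceOp, sub_sub_cancel]
  suffices (E (2 * N + b) : ℚ) =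
      ∑ r ∈ range (N + 1), (-1) ^ r * (N.choose r : ℚ) * (iteratedDiff E r b : ℚ) by
    exact_mod_cast this
  rw [add_comm, ← factorial_mul_coeff_iterate_derivative_egf, ← derivative_pow_apply, pow_mul,
    hD, Module.End.one_sub_pow_apply, map_sum, mul_sum]
  refine sum_congr rfl fun r _ => ?_
  rw [map_smul, smul_eq_mul, iteratedDiff_eq_factorial_mul_coeff]
  ring

theorem egf_eq_exp_mul (E : ℕ → ℤ) : egf E = exp ℚ * (egf E * rescale (-1) (exp ℚ)) := by
  have h : exp ℚ * rescale (-1) (exp ℚ) = 1 := by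
    simpa using exp_mul_exp_eq_exp_add (1 : ℚ) (-1)
  rw [mul_left_comm, h, mul_one]

theorem sum_choose_sub_eq_sum_Ico (d : ℕ → ℚ) {N : ℕ} (hN : N ≠ 0) :
    ∑ r ∈ range (N + 1), (-1) ^ r * N.choose r * d r - d 0
      - N * ∑ r ∈ Icc 1 8, ((N - 1).choose (r - 1) : ℚ) * ((-2) ^ r / r) * (d r / 2 ^ r)
      = ∑ r ∈ Ico 9 (N + 9), (-1) ^ r * N.choose r * d r := by
  set T : ℕ → ℚ := fun r => (-1) ^ r * N.choose r * d r
  have hext : ∑ r ∈ range (N + 1), T r = ∑ r ∈ range (N + 9), T r := by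
    refine sum_subset (range_subset_range.mpr (by omega)) fun r _ hr => ?_
    simp [T, Nat.choose_eq_zero_of_lt (by simpa using hr : N < r)]
  have hhead : ∑ r ∈ range 9, T r = d 0 + N * ∑ r ∈ Icc 1 8,
      ((N - 1).choose (r - 1) : ℚ) * ((-2) ^ r / r) * (d r / 2 ^ r) := by
    obtain ⟨N, rfl⟩ := Nat.exists_eq_add_one_of_ne_zero hN
    rw [sum_range_succ', show Icc 1 8 = Ico 1 9 from rfl, sum_Ico_eq_sum_range, mul_sum, add_comm]
    congr 1
    · simp [T]
    · refine sum_congr rfl fun i _ => ?_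
      have h : ((N + 1 : ℕ) : ℚ) * N.choose i = (N + 1).choose (i + 1) * (i + 1 : ℕ) := by
        exact_mod_cast Nat.add_one_mul_choose_eq N i
      rw [add_comm 1 i, Nat.add_sub_cancel, Nat.add_sub_cancel]
      simp only [T, neg_pow (2 : ℚ)]
      field_simp
      linear_combination -d (i + 1) * h
  rw [hext, ← sum_range_add_sum_Ico T (by omega : 9 ≤ N + 9), hhead]
  ring

section Euler

variable {a : ℤ} {E : ℕ → ℤ}
  (hE : ∀ n : ℕ, ∑ i ∈ range (n / 2 + 1),
    (n.choose (2 * i) : ℤ) * a ^ (2 * i) * E (n - 2 * i) = (1 - a) ^ n)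
include hE

theorem sum_choose_mul_mul_pow_add_neg_pow (n : ℕ) :
    ∑ i ∈ range (n + 1), (n.choose i : ℤ) * E i * (a ^ (n - i) + (-a) ^ (n - i)) =
      2 * (1 - a) ^ n := by
  have h := Finset.sum_range_succ_one_add_neg_one_pow_mul
    (fun i => (n.choose i : ℤ) * a ^ i * E (n - i)) n
  rw [← sum_range_reflect, ← hE n, ← h]
  refine sum_congr rfl fun i hi => ?_
  have hi : i ≤ n := Nat.lt_succ_iff.mp (mem_range.mp hi)
  rw [Nat.add_sub_cancel, Nat.choose_symm hi, Nat.sub_sub_self hi, neg_pow]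
  ring

theorem egf_mul_cosh :
    egf E * (rescale (a : ℚ) (exp ℚ) + rescale (-a : ℚ) (exp ℚ)) =
      2 * rescale (1 - a : ℚ) (exp ℚ) := by
  ext n
  refine mul_left_cancel₀ (Nat.cast_ne_zero.mpr n.factorial_ne_zero : (n ! : ℚ) ≠ 0) ?_
  have h := congrArg (Int.cast : ℤ → ℚ) (sum_choose_mul_mul_pow_add_neg_pow hE n)
  push_cast at h
  rw [factorial_mul_coeff_mul, ← map_ofNat C, coeff_C_mul, coeff_rescale, coeff_exp]
  convert h using 1
  · refine sum_congr rfl fun i _ => ?_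
    simp only [egf, coeff_mk, map_add, coeff_rescale, coeff_exp, Algebra.algebraMap_self, one_div,
      map_inv₀, map_natCast]
    field_simp
  · simp only [Algebra.algebraMap_self, one_div, map_inv₀, map_natCast]
    field_simp

theorem egf_mul_rescale_exp_neg_one_mul :
    egf E * rescale (-1) (exp ℚ) * (rescale (2 * a : ℚ) (exp ℚ) + 1) = 2 := by
  set e : ℚ → ℚ⟦X⟧ := fun c => rescale c (exp ℚ)
  have he : ∀ c d, e c * e d = e (c + d) := exp_mul_exp_eq_exp_add
  have he0 : e 0 = 1 := by simp [e]
  have h1 : e a * e a = e (2 * a) := by rw [he, two_mul]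
  have h2 : e (-a) * e a = 1 := by rw [he, neg_add_cancel, he0]
  have h3 : e (1 - a) * e a = e 1 := by rw [he, sub_add_cancel]
  have h4 : e 1 * e (-1) = 1 := by rw [he, add_neg_cancel, he0]
  -- `egf_mul_cosh` multiplied by `e^{ax} e^{-x}`
  linear_combination (e a * e (-1)) * egf_mul_cosh hE - (egf E * e (-1)) * h1
    - (egf E * e (-1)) * h2 + 2 * e (-1) * h3 + 2 * h4

theorem choose_mul_iteratedDiff_mem_zmultiples {N j r : ℕ} (hN : 2 ^ j ∣ N) (hr : 9 ≤ r)
    (b : ℕ) :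
    (N.choose r : ℚ) * iteratedDiff E r b ∈
      AddSubgroup.zmultiples ((2 : ℚ) ^ (j + 14 + 9 * padicValInt 2 a)) := by
  set Z := egf E * rescale (-1) (exp ℚ)
  have hR := derivative_eq_of_mul_rescale_exp_add_one_eq_two (egf_mul_rescale_exp_neg_one_mul hE)
  have hZ : Z ∈ hurwitzSubring :=
    mul_mem (egf_mem_hurwitzSubring E) (by simpa using rescale_exp_mem_hurwitzSubring (-1))
  have hspan := differenceOp_pow_exp_mul_mem_scaledSpan hR r
  rw [← egf_eq_exp_mul E] at hspan
  rw [iteratedDiff_eq_factorial_mul_coeff]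
  exact choose_mul_factorial_mul_coeff_mem_zmultiples hZ hN
    (by exact_mod_cast padicValInt_dvd (p := 2) a) hr hspan b

end Euler

end GeneralizedEuler

open GeneralizedEuler in
theorem stmt_8_general (a : ℤ)
    (E : ℕ → ℤ)
    (hE : ∀ n : ℕ, ∑ i ∈ Finset.range (n / 2 + 1),
      (n.choose (2 * i) : ℤ) * a ^ (2 * i) * E (n - 2 * i) = (1 - a) ^ n)
    (k m : ℕ) (hk : 0 < k) (hm : 0 < m) (b : ℕ)
    (A : ℕ → ℚ)
    (hA : ∀ r : ℕ, A r = (∑ i ∈ Finset.range (r + 1),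
      (r.choose i : ℚ) * (-1) ^ i * (E (2 * i + b) : ℚ)) / 2 ^ r) :
    PIntegral 2
      ((((E (2 ^ m * k + b) : ℚ) - (E b : ℚ)) -
        2 ^ (m - 1) * k * ∑ r ∈ Finset.Icc 1 8,
          ((2 ^ (m - 1) * k - 1).choose (r - 1) : ℚ) * ((-2) ^ r / r) * A r) /
        2 ^ (m + 13 + 9 * padicValInt 2 a)) := by
  set N := 2 ^ (m - 1) * k with hN
  have hN0 : N ≠ 0 := by positivity
  have h2N : 2 ^ m * k + b = 2 * N + b := by
    rw [hN, ← mul_assoc, ← pow_succ', Nat.sub_add_cancel hm]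
  have hNq : (2 : ℚ) ^ (m - 1) * k = N := by push_cast [hN]; rfl
  have hAd : ∀ r, A r = iteratedDiff E r b / 2 ^ r := fun r => by
    rw [hA, iteratedDiff]
    push_cast
    rfl
  have hterm : ∀ r ∈ Ico 9 (N + 9), (-1) ^ r * N.choose r * (iteratedDiff E r b : ℚ) ∈
      AddSubgroup.zmultiples (2 ^ (m + 13 + 9 * padicValInt 2 a)) := by
    intro r hr
    have := choose_mul_iteratedDiff_mem_zmultiples hE ⟨k, hN⟩ (mem_Ico.mp hr).1 b
    rw [show m - 1 + 14 = m + 13 by omega] at this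
    rw [mul_assoc]
    rcases neg_one_pow_eq_or ℚ r with h | h <;> simp [h, this]
  obtain ⟨w, hw⟩ := AddSubgroup.mem_zmultiples_iff.mp (sum_mem hterm)
  have hE0 : (E b : ℚ) = iteratedDiff E 0 b := by simp [iteratedDiff]
  rw [PIntegral, h2N, euler_eq_sum_choose_mul_iteratedDiff E N b, hNq, hE0]
  simp only [hAd]
  push_cast
  rw [sum_choose_sub_eq_sum_Ico (fun r => (iteratedDiff E r b : ℚ)) hN0, ← hw, zsmul_eq_mul,
    mul_div_cancel_right₀ _ (by positivity)]
  simp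

/-- Lemma 2.4: rational congruence for
`E_{2^m k + b}^{(a)} - E_b^{(a)}` modulo `2^(m+13+9·ord_2 a)`, where
`A_r(a,b) = 2^{-r} ∑_{i=0}^r C(r,i) (-1)^i E_{2i+b}^{(a)}`. -/
theorem stmt_8 (a : ℤ) (ha : a ≠ 0)
    (E : ℕ → ℤ)
    (hE : ∀ n : ℕ, ∑ i ∈ Finset.range (n / 2 + 1),
      (n.choose (2 * i) : ℤ) * a ^ (2 * i) * E (n - 2 * i) = (1 - a) ^ n)
    (k m : ℕ) (hk : 0 < k) (hm : 0 < m) (b : ℕ)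
    (A : ℕ → ℚ)
    (hA : ∀ r : ℕ, A r = (∑ i ∈ Finset.range (r + 1),
      (r.choose i : ℚ) * (-1) ^ i * (E (2 * i + b) : ℚ)) / 2 ^ r) :
    PIntegral 2
      ((((E (2 ^ m * k + b) : ℚ) - (E b : ℚ)) -
        2 ^ (m - 1) * k * ∑ r ∈ Finset.Icc 1 8,
          ((2 ^ (m - 1) * k - 1).choose (r - 1) : ℚ) * ((-2) ^ r / r) * A r) /
        2 ^ (m + 13 + 9 * padicValInt 2 a)) :=
  stmt_8_general a E hE k m hk hm b A hA
end

section
/- Let m ≥ 5 be an integer, let p ∈ {3, 5}, and let f : ℕ → ℚ be a p-regular function. Then for every positive integer k, f(p^{m-1} k) ≡ f(0) + p^{m-1} k ∑_{s=1}^{6} ((-1)^{s-1}/s) ∑_{r=0}^{s} C(s,r) (-1)^{s-r} f(r) (mod p^{m+5}), i.e., the p-adic valuation of the difference of the two sides is at least m + 5. -/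
/-- A function `f : ℕ → ℚ` taking `p`-integral values is `p`-regular if
`∑_{k=0}^n C(n,k) (-1)^k f(k) ≡ 0 (mod p^n)` for every `n ≥ 1`. -/
def PRegular (p : ℕ) (f : ℕ → ℚ) : Prop :=
  (∀ k : ℕ, PIntegral p (f k)) ∧
  ∀ n : ℕ, 1 ≤ n →
    PIntegral p ((∑ i ∈ Finset.range (n + 1), (n.choose i : ℚ) * (-1) ^ i * f i) / p ^ n)

/-!
Newton's expansion `f x = ∑ₙ C(x,n) Δⁿf(0)` together with `p`-regularity, which says that
`p ^ n ∣ Δⁿf(0)`, reduces the claim to the coefficients. For `x = p^(m-1) k` and `2 ≤ n ≤ 6`,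
`n! C(x,n) = x (x-1) ⋯ (x-n+1) ≡ (-1)^(n-1) (n-1)! x (mod x²)`, so `C(x,n)` differs from
`x (-1)^(n-1) / n` by a multiple of `x² / n!`; for `n ≥ 7`, `C(x,n) = (x / n) C(x-1,n-1)`. Legendre's
formula and `p ≥ 3` bound the valuations of `n!` and `n` well enough for every term to vanish
modulo `p^(m+5)`.
-/

open Finset Polynomial
open scoped Nat

section Newton

variable {K : Type*} [Field K]

lemma fwdDiff_iter_zero_eq_sum (f : ℕ → K) (n : ℕ) :
    (fwdDiff 1)^[n] f 0 = ∑ r ∈ range (n + 1), (n.choose r : K) * (-1) ^ (n - r) * f r := by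
  rw [fwdDiff_iter_eq_sum_shift]
  refine sum_congr rfl fun r _ => ?_
  rw [zsmul_eq_mul]
  push_cast
  simp only [zero_add, smul_eq_mul, mul_one]
  ring

lemma sub_taylor_eq_sum_fwdDiff_iter (f : ℕ → K) {d x : ℕ} (hdx : d ≤ x) :
    f x - (f 0 + (x : K) * ∑ s ∈ Icc 1 d, ((-1) ^ (s - 1) / (s : K)) * (fwdDiff 1)^[s] f 0) =
      ∑ n ∈ Icc 1 x, ((x.choose n : K) - if n ≤ d then (x : K) * (-1) ^ (n - 1) / n else 0) *
        (fwdDiff 1)^[n] f 0 := by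
  have newton : f x = f 0 + ∑ n ∈ Icc 1 x, (x.choose n : K) * (fwdDiff 1)^[n] f 0 := by
    have := shift_eq_sum_fwdDiff_iter 1 f x 0
    rw [range_eq_Ico, sum_eq_sum_Ico_succ_bot (by omega)] at this
    simpa [nsmul_eq_mul, Ico_add_one_right_eq_Icc] using this
  have truncation : (x : K) * ∑ s ∈ Icc 1 d, ((-1) ^ (s - 1) / (s : K)) * (fwdDiff 1)^[s] f 0 =
      ∑ n ∈ Icc 1 x, (if n ≤ d then (x : K) * (-1) ^ (n - 1) / n else 0) * (fwdDiff 1)^[n] f 0 := by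
    simp_rw [ite_mul, zero_mul, ← sum_filter]
    have hfilter : {n ∈ Icc 1 x | n ≤ d} = Icc 1 d := by
      ext n
      simp only [mem_filter, mem_Icc]
      omega
    rw [hfilter, mul_sum]
    exact sum_congr rfl fun n _ => by ring
  rw [newton, truncation, add_sub_add_left_eq_sub, ← sum_sub_distrib]
  simp_rw [sub_mul]

end Newton

section Arithmetic

lemma sq_dvd_descFactorial_succ_sub (x j : ℕ) :
    (x : ℤ) ^ 2 ∣ x.descFactorial (j + 1) - (-1) ^ j * j ! * x := by
  have hsucc : (x.descFactorial (j + 1) : ℤ) = x * (descPochhammer ℤ j).eval ((x : ℤ) - 1) := by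
    rw [← descPochhammer_eval_eq_descFactorial ℤ, descPochhammer_succ_left]
    simp [eval_comp]
  have hneg_one : (descPochhammer ℤ j).eval (-1) = (-1) ^ j * j ! := by
    have := ascPochhammer_eval_neg_eq_descPochhammer ℤ (-1) j
    rw [neg_neg, ascPochhammer_eval_one] at this
    rw [← mul_right_inj' (pow_ne_zero j (by norm_num : (-1 : ℤ) ≠ 0)), ← this, ← mul_assoc,
      ← mul_pow]
    simp
  -- `P (x - 1) ≡ P (-1) (mod x)` for the integer polynomial `P = descPochhammer ℤ j`
  have hdvd := sub_dvd_eval_sub ((x : ℤ) - 1) (-1) (descPochhammer ℤ j)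
  rw [sub_neg_eq_add, sub_add_cancel, hneg_one] at hdvd
  rw [hsucc, sq, show (-1) ^ j * (j ! : ℤ) * x = x * ((-1) ^ j * j !) by ring, ← mul_sub]
  exact mul_dvd_mul_left _ hdvd

lemma add_six_le_three_pow {v : ℕ} (hv : 2 ≤ v) : v + 6 ≤ 3 ^ v := by
  induction v, hv using Nat.le_induction with
  | base => norm_num
  | succ v _ ih => rw [pow_succ]; omega

lemma padicValNat_add_six_le {p n : ℕ} (hp : 3 ≤ p) (hn : 7 ≤ n) : padicValNat p n + 6 ≤ n := by
  have hpow : p ^ padicValNat p n ≤ n := Nat.le_of_dvd (by omega) pow_padicValNat_dvd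
  have h3 : 3 ^ padicValNat p n ≤ p ^ padicValNat p n := Nat.pow_le_pow_left hp _
  rcases lt_or_ge (padicValNat p n) 2 with h | h
  · omega
  · have := add_six_le_three_pow h
    omega

lemma padicValNat_factorial_add_two_le {p n : ℕ} [Fact p.Prime] (hp : 3 ≤ p) (hn : 2 ≤ n) :
    padicValNat p n ! + 2 ≤ n := by
  have hlt := sub_one_mul_padicValNat_factorial_lt_of_ne_zero p (n := n) (by omega)
  have : 2 * padicValNat p n ! ≤ (p - 1) * padicValNat p n ! := Nat.mul_le_mul_right _ (by omega)
  omega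

end Arithmetic

section Padic

variable {p : ℕ} [hp : Fact p.Prime]

lemma pIntegral_iff_norm_le_one {q : ℚ} : PIntegral p q ↔ ‖(q : ℚ_[p])‖ ≤ 1 := by
  refine ⟨Padic.norm_rat_le_one, fun h hden => ?_⟩
  have hq : q ≠ 0 := by
    rintro rfl
    exact hp.out.one_lt.ne' (Nat.dvd_one.1 hden)
  have hnum : ¬ (p : ℤ) ∣ q.num := fun hnum =>
    hp.out.one_lt.ne' (Nat.Coprime.eq_one_of_dvd (Nat.Coprime.coprime_dvd_left
      (Int.natCast_dvd.1 hnum) q.reduced) hden)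
  have hval : padicValRat p q < 0 := by
    have := one_le_padicValNat_of_dvd q.den_ne_zero hden
    rw [padicValRat, padicValInt.eq_zero_of_not_dvd hnum]
    omega
  rw [Padic.norm_eq_zpow_neg_valuation (by exact_mod_cast hq), Padic.valuation_ratCast] at h
  exact h.not_gt (one_lt_zpow₀ (by exact_mod_cast hp.out.one_lt) (by omega))

lemma pIntegral_div_pow_iff {q : ℚ} {n : ℕ} :
    PIntegral p (q / p ^ n) ↔ ‖(q : ℚ_[p])‖ ≤ (p : ℝ) ^ (-n : ℤ) := by
  rw [pIntegral_iff_norm_le_one, Rat.cast_div, norm_div, Rat.cast_pow, Rat.cast_natCast,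
    Padic.norm_p_pow, div_le_one (zpow_pos (by exact_mod_cast hp.out.pos) _)]

lemma Padic.norm_natCast_eq_zpow {n : ℕ} (hn : n ≠ 0) :
    ‖(n : ℚ_[p])‖ = (p : ℝ) ^ (-(padicValNat p n : ℤ)) := by
  rw [Padic.norm_eq_zpow_neg_valuation (by exact_mod_cast hn), Padic.valuation_natCast]

lemma Padic.norm_choose_succ_sub_le (x j : ℕ) :
    ‖(x.choose (j + 1) : ℚ_[p]) - x * (-1) ^ j / (j + 1)‖ ≤
      ‖(x : ℚ_[p])‖ ^ 2 / ‖((j + 1)! : ℚ_[p])‖ := by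
  obtain ⟨t, ht⟩ := sq_dvd_descFactorial_succ_sub x j
  have hfac : ((j + 1)! : ℚ_[p]) ≠ 0 := by exact_mod_cast (j + 1).factorial_ne_zero
  have hcoeff : (x.choose (j + 1) : ℚ_[p]) - x * (-1) ^ j / (j + 1) =
      x ^ 2 * t / (j + 1)! := by
    rw [Nat.descFactorial_eq_factorial_mul_choose] at ht
    have ht' : ((j + 1)! * x.choose (j + 1) : ℚ_[p]) - (-1) ^ j * j ! * x = x ^ 2 * t := by
      exact_mod_cast congrArg (fun z : ℤ => (z : ℚ_[p])) ht
    rw [eq_div_iff hfac, ← ht', Nat.factorial_succ]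
    push_cast
    field_simp
  rw [hcoeff, norm_div, norm_mul, norm_pow]
  gcongr
  exact mul_le_of_le_one_right (by positivity) (Padic.norm_int_le_one t)

lemma Padic.norm_choose_le_div (x : ℕ) {n : ℕ} (hn : n ≠ 0) :
    ‖(x.choose n : ℚ_[p])‖ ≤ ‖(x : ℚ_[p])‖ / ‖(n : ℚ_[p])‖ := by
  obtain _ | x := x
  · simp [Nat.choose_eq_zero_of_lt (Nat.pos_of_ne_zero hn)]
  obtain ⟨j, rfl⟩ := Nat.exists_eq_succ_of_ne_zero hn
  have hid : ((x + 1 : ℕ) : ℚ_[p]) * x.choose j = (x + 1).choose (j + 1) * (j + 1 : ℕ) := by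
    exact_mod_cast congrArg (fun z : ℕ => (z : ℚ_[p])) (Nat.add_one_mul_choose_eq x j)
  rw [le_div_iff₀ (norm_pos_iff.2 (by exact_mod_cast hn)), ← norm_mul, ← hid, norm_mul]
  exact mul_le_of_le_one_right (norm_nonneg _)
    (by exact_mod_cast Padic.norm_int_le_one (x.choose j))

end Padic

section Regular

variable {p : ℕ} [Fact p.Prime]

lemma PRegular.norm_fwdDiff_iter_le {f : ℕ → ℚ} (hf : PRegular p f) {n : ℕ} (hn : 1 ≤ n) :
    ‖(((fwdDiff 1)^[n] f 0 : ℚ) : ℚ_[p])‖ ≤ (p : ℝ) ^ (-n : ℤ) := by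
  have h := pIntegral_div_pow_iff.1 (hf.2 n hn)
  have hsign : ∑ i ∈ range (n + 1), (n.choose i : ℚ) * (-1) ^ i * f i =
      (-1) ^ n * (fwdDiff 1)^[n] f 0 := by
    rw [fwdDiff_iter_zero_eq_sum, mul_sum]
    refine sum_congr rfl fun i hi => ?_
    obtain ⟨j, rfl⟩ := Nat.exists_eq_add_of_le (mem_range_succ_iff.1 hi)
    have hsq : ((-1 : ℚ) ^ j) ^ 2 = 1 := by rw [← pow_mul, pow_mul', neg_one_sq, one_pow]
    rw [Nat.add_sub_cancel_left, pow_add]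
    linear_combination (-((i + j).choose i : ℚ) * (-1) ^ i * f i) * hsq
  rwa [hsign, Rat.cast_mul, norm_mul, Rat.cast_pow, Rat.cast_neg, Rat.cast_one, norm_pow,
    norm_neg, norm_one, one_pow, one_mul] at h

lemma norm_choose_sub_ite_mul_le (hp : 3 ≤ p) {N x n : ℕ} (hN : 4 ≤ N)
    (hx : ‖(x : ℚ_[p])‖ ≤ (p : ℝ) ^ (-N : ℤ)) (hn : 1 ≤ n) {D : ℚ_[p]}
    (hD : ‖D‖ ≤ (p : ℝ) ^ (-n : ℤ)) :
    ‖((x.choose n : ℚ_[p]) - if n ≤ 6 then (x : ℚ_[p]) * (-1) ^ (n - 1) / n else 0) * D‖ ≤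
      (p : ℝ) ^ (-(N + 6 : ℤ)) := by
  have hp0 : (p : ℝ) ≠ 0 := by positivity
  have hp1 : (1 : ℝ) ≤ p := by exact_mod_cast (by omega : 1 ≤ p)
  rw [norm_mul]
  rcases (by omega : n = 1 ∨ 2 ≤ n ∧ n ≤ 6 ∨ 7 ≤ n) with rfl | ⟨hn2, hn6⟩ | hn7
  · simpa using zpow_nonneg (Nat.cast_nonneg p) _
  · obtain ⟨j, rfl⟩ := Nat.exists_eq_add_of_le' hn
    have hv := padicValNat_factorial_add_two_le hp hn2
    rw [if_pos hn6, Nat.add_sub_cancel]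
    push_cast
    calc _ ≤ ((p : ℝ) ^ (-N : ℤ)) ^ 2 / (p : ℝ) ^ (-(padicValNat p (j + 1)! : ℤ)) *
          (p : ℝ) ^ (-(j + 1 : ℕ) : ℤ) := by
          rw [← Padic.norm_natCast_eq_zpow (Nat.factorial_ne_zero _)]
          gcongr
          exact (Padic.norm_choose_succ_sub_le x j).trans (by gcongr)
      _ = (p : ℝ) ^ (-2 * N + padicValNat p (j + 1)! - (j + 1) : ℤ) := by
          simp only [← zpow_natCast, ← zpow_mul, ← zpow_sub₀ hp0, ← zpow_add₀ hp0]
          congr 1; push_cast; ring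
      _ ≤ _ := zpow_le_zpow_right₀ hp1 (by omega)
  · have hv := padicValNat_add_six_le hp hn7
    rw [if_neg (by omega), sub_zero]
    calc _ ≤ (p : ℝ) ^ (-N : ℤ) / (p : ℝ) ^ (-(padicValNat p n : ℤ)) * (p : ℝ) ^ (-n : ℤ) := by
          rw [← Padic.norm_natCast_eq_zpow (by omega)]
          gcongr
          exact (Padic.norm_choose_le_div x (by omega)).trans (by gcongr)
      _ = (p : ℝ) ^ (-N + padicValNat p n - n : ℤ) := by
          simp only [← zpow_sub₀ hp0, ← zpow_add₀ hp0]
          congr 1; ring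
      _ ≤ _ := zpow_le_zpow_right₀ hp1 (by omega)

theorem PRegular.norm_sub_taylor_le {f : ℕ → ℚ} (hf : PRegular p f) (hp : 3 ≤ p) {N x : ℕ}
    (hN : 4 ≤ N) (hx : p ^ N ∣ x) :
    ‖((f x - (f 0 + (x : ℚ) * ∑ s ∈ Icc (1 : ℕ) 6,
        ((-1) ^ (s - 1) / (s : ℚ)) * (fwdDiff 1)^[s] f 0) : ℚ) : ℚ_[p])‖ ≤
      (p : ℝ) ^ (-(N + 6 : ℤ)) := by
  obtain rfl | hx0 := eq_or_ne x 0
  · simp only [Nat.cast_zero, zero_mul, add_zero, sub_self, Rat.cast_zero, norm_zero]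
    positivity
  have h6x : 6 ≤ x := calc
    6 ≤ 3 ^ N := le_trans (by norm_num) (Nat.pow_le_pow_right (by norm_num) hN)
    _ ≤ p ^ N := Nat.pow_le_pow_left hp N
    _ ≤ x := Nat.le_of_dvd (Nat.pos_of_ne_zero hx0) hx
  have hxnorm : ‖(x : ℚ_[p])‖ ≤ (p : ℝ) ^ (-N : ℤ) := by
    exact_mod_cast (Padic.norm_int_le_pow_iff_dvd (p := p) x N).2 (by exact_mod_cast hx)
  rw [sub_taylor_eq_sum_fwdDiff_iter f h6x, Rat.cast_sum]
  refine IsUltrametricDist.norm_sum_le_of_forall_le_of_nonneg (by positivity) fun n hn => ?_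
  have hn1 : 1 ≤ n := (mem_Icc.1 hn).1
  rw [Rat.cast_mul, Rat.cast_sub, apply_ite Rat.cast]
  push_cast
  exact norm_choose_sub_ite_mul_le hp hN hxnorm hn1 (hf.norm_fwdDiff_iter_le hn1)

end Regular

theorem stmt_9_general (m : ℕ) (hm : 5 ≤ m) (p : ℕ) (hp : p = 3 ∨ p = 5)
    (f : ℕ → ℚ) (hf : PRegular p f) (k : ℕ) :
    PIntegral p
      ((f (p ^ (m - 1) * k) -
        (f 0 + p ^ (m - 1) * k * ∑ s ∈ Finset.Icc (1 : ℕ) 6, ((-1) ^ (s - 1) / (s : ℚ)) *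
          ∑ r ∈ Finset.range (s + 1), (s.choose r : ℚ) * (-1) ^ (s - r) * f r)) /
        p ^ (m + 5)) := by
  have : Fact p.Prime := ⟨by rcases hp with rfl | rfl <;> norm_num⟩
  simp_rw [← fwdDiff_iter_zero_eq_sum]
  rw [show m + 5 = m - 1 + 6 by omega, pIntegral_div_pow_iff]
  have hbound := hf.norm_sub_taylor_le (by omega) (N := m - 1) (by omega) (dvd_mul_right _ k)
  exact_mod_cast hbound

/-- Lemma 3.2: for a `p`-regular function `f` with `p ∈ {3,5}` and `m ≥ 5`,
`f(p^{m-1}k) ≡ f(0) + p^{m-1}k ∑_{s=1}^6 ((-1)^{s-1}/s) ∑_{r=0}^s C(s,r)(-1)^{s-r} f(r)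
(mod p^{m+5})`. -/
theorem stmt_9 (m : ℕ) (hm : 5 ≤ m) (p : ℕ) (hp : p = 3 ∨ p = 5)
    (f : ℕ → ℚ) (hf : PRegular p f) (k : ℕ) (hk : 0 < k) :
    PIntegral p
      ((f (p ^ (m - 1) * k) -
        (f 0 + p ^ (m - 1) * k * ∑ s ∈ Finset.Icc (1 : ℕ) 6, ((-1) ^ (s - 1) / (s : ℚ)) *
          ∑ r ∈ Finset.range (s + 1), (s.choose r : ℚ) * (-1) ^ (s - r) * f r)) /
        p ^ (m + 5)) :=
  stmt_9_general m hm p hp f hf k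
end

section
/- For every nonnegative integer k, (1 + 5^{4k}) U_{4k} ≡ 6250k^6 + 50625k^5 + 51250k^4 + 59875k^3 + 72600k^2 + 7545k + 2 (mod 5^7) and (1 + 5^{4k+2}) U_{4k+2} ≡ 59375k^6 + 40625k^5 + 10625k^4 + 48875k^3 + 5575k^2 + 37500k - 52 (mod 5^7). -/
/-!
The recurrence says that `∑ Uₙ xⁿ / n!` is `1 / (2 cosh x - 1)`. Since
`(2 cosh x - 1) (eˣ + e²ˣ) = 1 + e³ˣ`, expanding `1 / (1 + y) = ∑ₘ (-1/2)ᵐ (1/2) (y - 1)ᵐ` at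
`y = e³ˣ` and truncating after `30` terms gives an exponential sum `∑ cₐ aⁿ` over integers `a`
which agrees with `Uₙ` modulo `5⁷`: the error is a `30`-th forward difference of `x ↦ (3x)ⁿ`,
hence divisible by `30!`, a multiple of `5⁷`. As `5⁷ ∣ aᵐ (a⁴ - 1)⁷` for every integer `a` and
`m ≥ 7`, the `7`-th forward difference of `k ↦ U_{4k+r}` vanishes modulo `5⁷` for `k ≥ 2`, so
there `U_{4k+r}` is a polynomial of degree `< 7` in `k`, fixed by its values at `k = 2, …, 8`.
-/

open Finset
open scoped Nat fwdDiff

section FwdDiff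

variable {R : Type*} [CommRing R]

theorem map_fwdDiff_iter {M G G' F : Type*} [AddCommMonoid M] [AddCommGroup G] [AddCommGroup G']
    [FunLike F G G'] [AddMonoidHomClass F G G'] (L : F) (h : M) (f : M → G) (n : ℕ) (y : M) :
    L (Δ_[h] ^[n] f y) = Δ_[h] ^[n] (fun x ↦ L (f x)) y := by
  simp only [fwdDiff_iter_eq_sum_shift, map_sum, map_zsmul]

theorem fwdDiff_iter_mul_pow (c x : R) (m y : ℕ) :
    Δ_[1] ^[m] (fun k ↦ c * x ^ k) y = c * x ^ y * (x - 1) ^ m := by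
  induction m generalizing y with
  | zero => simp
  | succ m ih =>
    rw [Function.iterate_succ_apply', fwdDiff, ih, ih, pow_succ, pow_succ]
    ring

theorem fwdDiff_iter_succ_natCast_mul (g : ℕ → R) (m y : ℕ) :
    Δ_[1] ^[m + 1] (fun x : ℕ ↦ (x : R) * g x) y =
      y * Δ_[1] ^[m + 1] g y + (m + 1) * Δ_[1] ^[m] g (y + 1) := by
  induction m generalizing y with
  | zero =>
    simp only [zero_add, Function.iterate_one, Function.iterate_zero, id_eq, fwdDiff]
    push_cast
    ring
  | succ m ih =>
    rw [Function.iterate_succ_apply', fwdDiff, ih, ih, Function.iterate_succ_apply' _ (m + 1),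
      fwdDiff, Function.iterate_succ_apply' _ m g, fwdDiff]
    push_cast
    ring

theorem factorial_dvd_fwdDiff_iter_pow (m n y : ℕ) :
    (m ! : R) ∣ Δ_[1] ^[m] (fun x : ℕ ↦ (x : R) ^ n) y := by
  induction n generalizing m y with
  | zero =>
    rcases m with _ | m
    · simp
    · have hΔ : (Δ_[1] fun x : ℕ ↦ (x : R) ^ 0) = 0 := by ext; simp [fwdDiff]
      rw [Function.iterate_succ_apply, hΔ, Function.iterate_fixed (by ext; simp [fwdDiff])]
      exact dvd_zero _
  | succ n ih =>
    rcases m with _ | m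
    · simp only [Nat.factorial_zero, Nat.cast_one, one_dvd]
    · have hpow : (fun x : ℕ ↦ (x : R) ^ (n + 1)) = fun x : ℕ ↦ (x : R) * (x : R) ^ n := by
        ext; ring
      rw [hpow, fwdDiff_iter_succ_natCast_mul]
      refine dvd_add (dvd_mul_of_dvd_right (ih (m + 1) y) _) ?_
      rw [Nat.factorial_succ, Nat.cast_mul, Nat.cast_succ]
      exact mul_dvd_mul_left _ (ih m (y + 1))

theorem eq_zero_of_fwdDiff_iter_eq_zero {G : Type*} [AddCommGroup G] {f : ℕ → G} {a n : ℕ}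
    (hΔ : ∀ k, a ≤ k → Δ_[1] ^[n] f k = 0) (hf : ∀ k < n, f (a + k) = 0) (k : ℕ) (hk : a ≤ k) :
    f k = 0 := by
  obtain ⟨k, rfl⟩ := Nat.exists_eq_add_of_le hk
  have hΔa : ∀ j, Δ_[1] ^[j] f a = 0 := by
    intro j
    rcases lt_or_ge j n with hj | hj
    · rw [fwdDiff_iter_eq_sum_shift]
      exact sum_eq_zero fun i hi ↦ by
        rw [nsmul_one, Nat.cast_id, hf i (by simp only [mem_range] at hi; omega), smul_zero]
    · obtain ⟨j, rfl⟩ := Nat.exists_eq_add_of_le hj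
      rw [add_comm, Function.iterate_add_apply, fwdDiff_iter_eq_sum_shift]
      exact sum_eq_zero fun i _ ↦ by rw [hΔ _ (by simp), smul_zero]
  have := shift_eq_sum_fwdDiff_iter 1 f k a
  rw [nsmul_one, Nat.cast_id] at this
  rw [this]
  exact sum_eq_zero fun j _ ↦ by rw [hΔa, smul_zero]

theorem fwdDiff_iter_comp_natCast {G : Type*} [AddCommGroup G] (f : R → G) (n k : ℕ) :
    Δ_[1] ^[n] (fun x : ℕ ↦ f x) k = Δ_[1] ^[n] f (k : R) := by
  simp [fwdDiff_iter_eq_sum_shift]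

theorem eq_sum_mul_pow_of_fwdDiff_iter_eq_zero {f : ℕ → R} {a n : ℕ} (c : ℕ → R)
    (hΔ : ∀ k, a ≤ k → Δ_[1] ^[n] f k = 0)
    (hf : ∀ k < n, f (a + k) = ∑ j ∈ range n, c j * ((a + k : ℕ) : R) ^ j) (k : ℕ) (hk : a ≤ k) :
    f k = ∑ j ∈ range n, c j * (k : R) ^ j := by
  rw [← sub_eq_zero]
  refine eq_zero_of_fwdDiff_iter_eq_zero (f := fun k ↦ f k - ∑ j ∈ range n, c j * (k : R) ^ j)
    (fun k hk ↦ ?_) (fun k hk ↦ sub_eq_zero.2 (hf k hk)) k hk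
  have hpoly := congrFun (fwdDiff_iter_sum_mul_pow_eq_zero (n := n) c) (k : R)
  rw [← fwdDiff_iter_comp_natCast, Pi.zero_apply] at hpoly
  rw [← hΔ k hk, ← sub_zero (Δ_[1] ^[n] f k), ← hpoly]
  simp only [fwdDiff_iter_eq_sum_shift, smul_sub, sum_sub_distrib]

end FwdDiff

section CoshConv

variable {R : Type*} [CommRing R]

theorem sum_range_one_add_neg_one_pow_mul (g : ℕ → R) (n : ℕ) :
    ∑ j ∈ range (n + 1), (1 + (-1) ^ j) * g j = 2 * ∑ i ∈ range (n / 2 + 1), g (2 * i) := by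
  induction n with
  | zero =>
    simp only [zero_add, range_one, sum_singleton, pow_zero, Nat.zero_div, mul_zero]
    ring
  | succ n ih =>
    rw [sum_range_succ, ih]
    rcases Nat.even_or_odd n with ⟨t, rfl⟩ | ⟨t, rfl⟩
    · rw [show (t + t + 1) / 2 = (t + t) / 2 by omega, pow_succ, Even.neg_one_pow ⟨t, rfl⟩]
      ring
    · have h1 : (2 * t + 1 + 1) / 2 = (2 * t + 1) / 2 + 1 := by omega
      have h2 : 2 * ((2 * t + 1) / 2 + 1) = 2 * t + 1 + 1 := by omega
      rw [h1, sum_range_succ _ ((2 * t + 1) / 2 + 1), h2, Even.neg_one_pow ⟨t + 1, by ring⟩]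
      ring

/-- The `n`-th coefficient of the exponential generating function `(2 cosh x - 1) ∑ vₙ xⁿ / n!`. -/
def coshConv : (ℕ → R) →ₗ[R] (ℕ → R) where
  toFun v n := v n + 2 * ∑ i ∈ Icc 1 (n / 2), (n.choose (2 * i) : R) * v (n - 2 * i)
  map_add' v w := by ext n; simp only [Pi.add_apply, mul_add, sum_add_distrib]; ring
  map_smul' c v := by
    ext n
    simp only [Pi.smul_apply, smul_eq_mul, RingHom.id_apply, mul_add, mul_sum]
    congr 1
    exact sum_congr rfl fun i _ ↦ by ring

theorem coshConv_apply (v : ℕ → R) (n : ℕ) :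
    coshConv v n = v n + 2 * ∑ i ∈ Icc 1 (n / 2), (n.choose (2 * i) : R) * v (n - 2 * i) := rfl

theorem coshConv_injective : Function.Injective (coshConv (R := R)) := by
  rw [← LinearMap.ker_eq_bot, LinearMap.ker_eq_bot']
  intro v hv
  funext n
  induction n using Nat.strong_induction_on with
  | _ n ih =>
    have hn := congrFun hv n
    rw [coshConv_apply, sum_eq_zero fun i hi ↦ ?_] at hn
    · simpa using hn
    · simp only [mem_Icc] at hi
      rw [ih _ (by omega), Pi.zero_apply, mul_zero]

theorem coshConv_pow (x : R) :
    coshConv (fun n ↦ x ^ n) = fun n ↦ (x + 1) ^ n + (x - 1) ^ n - x ^ n := by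
  ext n
  have hsplit : range (n / 2 + 1) = insert 0 (Icc 1 (n / 2)) := by
    ext i; simp only [mem_range, mem_insert, mem_Icc]; omega
  have hexp : (x + 1) ^ n + (x - 1) ^ n =
      ∑ j ∈ range (n + 1), (1 + (-1) ^ j) * ((n.choose j : R) * x ^ (n - j)) := by
    rw [add_comm x, sub_eq_neg_add, add_pow, add_pow, ← sum_add_distrib]
    refine sum_congr rfl fun j _ ↦ ?_
    ring
  rw [hexp, sum_range_one_add_neg_one_pow_mul, hsplit, sum_insert (by simp), coshConv_apply]
  simp only [mul_zero, Nat.choose_zero_right, Nat.cast_one, tsub_zero, one_mul]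
  ring

theorem coshConv_pow_add_pow (a : R) :
    coshConv (fun n ↦ (a + 1) ^ n + (a + 2) ^ n) = fun n ↦ a ^ n + (a + 3) ^ n := by
  have hsum : (fun n ↦ (a + 1) ^ n + (a + 2) ^ n) = (fun n ↦ (a + 1) ^ n) + fun n ↦ (a + 2) ^ n :=
    rfl
  ext n
  rw [hsum, map_add, coshConv_pow, coshConv_pow, Pi.add_apply]
  ring

theorem coshConv_eq_zero_pow {u : ℕ → R} (hu0 : u 0 = 1)
    (hu : ∀ n, 1 ≤ n → u n = -2 * ∑ i ∈ Icc 1 (n / 2), (n.choose (2 * i) : R) * u (n - 2 * i)) :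
    coshConv u = fun n ↦ 0 ^ n := by
  ext n
  rcases Nat.eq_zero_or_pos n with rfl | hn
  · simp [coshConv_apply, hu0]
  · rw [coshConv_apply, hu n hn, zero_pow hn.ne']
    ring

end CoshConv

section ApproxSeq

variable {R : Type*} [CommRing R]

def expPair (x : ℕ) : ℕ → R := fun n ↦ (3 * x + 1 : R) ^ n + (3 * x + 2 : R) ^ n

/-- The coefficients of `∑_{m<N} (-h)ᵐ h (e³ˣ - 1)ᵐ (eˣ + e²ˣ)`; for `2 h = 1` this truncates
`(eˣ + e²ˣ) / (1 + e³ˣ) = 1 / (2 cosh x - 1)`. -/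
def approxSeq (h : R) (N : ℕ) : ℕ → R :=
  ∑ m ∈ range N, ((-h) ^ m * h) • Δ_[1] ^[m] expPair 0

theorem map_approxSeq {M : Type*} [AddCommGroup M] [Module R M] (L : (ℕ → R) →ₗ[R] M)
    (h : R) (N : ℕ) :
    L (approxSeq h N) = ∑ m ∈ range N, ((-h) ^ m * h) • Δ_[1] ^[m] (fun x ↦ L (expPair x)) 0 := by
  simp only [approxSeq, map_sum, map_smul, map_fwdDiff_iter]

theorem coshConv_approxSeq {h : R} (h2 : 2 * h = 1) {N : ℕ} (hN : (N ! : R) = 0) :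
    coshConv (approxSeq h N) = fun n ↦ 0 ^ n := by
  set Ψ : ℕ → ℕ → R := fun x n ↦ (3 * x : R) ^ n
  have hΨ : (fun x ↦ coshConv (expPair x)) = fun x ↦ Ψ x + Ψ (x + 1) := by
    ext x n
    unfold expPair
    rw [coshConv_pow_add_pow]
    simp only [Ψ, Pi.add_apply]
    push_cast
    ring
  have hstep (m : ℕ) : Δ_[1] ^[m] (fun x ↦ coshConv (expPair x)) 0 =
      2 • Δ_[1] ^[m] Ψ 0 + Δ_[1] ^[m + 1] Ψ 0 := by
    rw [hΨ, Function.iterate_succ_apply', fwdDiff]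
    change Δ_[1] ^[m] (Ψ + fun x ↦ Ψ (x + 1)) 0 = _
    rw [fwdDiff_iter_add, Pi.add_apply, fwdDiff_iter_comp_add]
    abel
  have hD : Δ_[1] ^[N] Ψ 0 = 0 := by
    ext n
    have := map_fwdDiff_iter (Pi.evalAddMonoidHom (fun _ : ℕ ↦ R) n) 1 Ψ N 0
    simp only [Pi.evalAddMonoidHom_apply] at this
    rw [this, Pi.zero_apply]
    have hΨn : (fun x ↦ Ψ x n) = (3 : R) ^ n • fun x : ℕ ↦ (x : R) ^ n := by
      ext x
      simp only [Ψ, mul_pow, Pi.smul_apply, smul_eq_mul]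
    rw [hΨn]
    obtain ⟨t, ht⟩ := factorial_dvd_fwdDiff_iter_pow (R := R) N n 0
    rw [fwdDiff_iter_const_smul, Pi.smul_apply, ht, hN, zero_mul, smul_zero]
  rw [map_approxSeq, sum_congr rfl fun m _ ↦ by rw [hstep m]]
  have htel (m : ℕ) : ((-h) ^ m * h) • (2 • Δ_[1] ^[m] Ψ 0 + Δ_[1] ^[m + 1] Ψ 0) =
      (-h) ^ m • Δ_[1] ^[m] Ψ 0 - (-h) ^ (m + 1) • Δ_[1] ^[m + 1] Ψ 0 := by
    ext n
    simp only [Pi.smul_apply, Pi.add_apply, Pi.sub_apply, smul_eq_mul, nsmul_eq_mul, Pi.mul_apply,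
      Pi.natCast_apply]
    linear_combination ((-h) ^ m * Δ_[1] ^[m] Ψ 0 n) * h2
  rw [sum_congr rfl fun m _ ↦ htel m, sum_range_sub', hD, smul_zero, sub_zero, pow_zero, one_smul]
  ext n
  simp [Ψ]

theorem eq_approxSeq {h : R} (h2 : 2 * h = 1) {N : ℕ} (hN : (N ! : R) = 0) {u : ℕ → R}
    (hu0 : u 0 = 1)
    (hu : ∀ n, 1 ≤ n → u n = -2 * ∑ i ∈ Icc 1 (n / 2), (n.choose (2 * i) : R) * u (n - 2 * i)) :
    u = approxSeq h N :=
  coshConv_injective <| by rw [coshConv_eq_zero_pow hu0 hu, coshConv_approxSeq h2 hN]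

end ApproxSeq

theorem ZMod.pow_sub_self_pow_eq_zero {p : ℕ} [Fact p.Prime] (e : ℕ) (x : ZMod (p ^ e)) :
    (x ^ p - x) ^ e = 0 := by
  obtain ⟨a, rfl⟩ : ∃ a : ℤ, (a : ZMod (p ^ e)) = x := ⟨_, ZMod.intCast_zmod_cast x⟩
  have hp : (p : ℤ) ∣ a ^ p - a := by
    rw [← ZMod.intCast_zmod_eq_zero_iff_dvd]
    push_cast
    rw [ZMod.pow_card, sub_self]
  have := (ZMod.intCast_zmod_eq_zero_iff_dvd ((a ^ p - a) ^ e) (p ^ e)).2 <| by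
    push_cast
    exact pow_dvd_pow_of_dvd hp e
  push_cast at this
  exact this

theorem fwdDiff_iter_approxSeq_comp_eq_zero {p e : ℕ} [Fact p.Prime] (h : ZMod (p ^ e))
    (N r k : ℕ) (hk : e ≤ (p - 1) * k + r) :
    Δ_[1] ^[e] (fun k ↦ approxSeq h N ((p - 1) * k + r)) k = 0 := by
  let L : (ℕ → ZMod (p ^ e)) →ₗ[ZMod (p ^ e)] ZMod (p ^ e) :=
    { toFun v := Δ_[1] ^[e] (fun k ↦ v ((p - 1) * k + r)) k
      map_add' v w := congrFun (fwdDiff_iter_add 1 _ _ e) k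
      map_smul' c v := congrFun (fwdDiff_iter_const_smul 1 c _ e) k }
  have hp0 : p ≠ 0 := (Fact.out : p.Prime).ne_zero
  obtain ⟨s, hs⟩ : ∃ s, (p - 1) * k + r = s + e := ⟨_, (Nat.sub_add_cancel hk).symm⟩
  have hpow (a : ZMod (p ^ e)) : Δ_[1] ^[e] (fun k ↦ a ^ ((p - 1) * k + r)) k = 0 := by
    have hgeom : (fun k ↦ a ^ ((p - 1) * k + r)) = fun k ↦ a ^ r * (a ^ (p - 1)) ^ k := by
      ext k
      ring
    have hexp : a ^ r * (a ^ (p - 1)) ^ k = a ^ s * a ^ e := by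
      rw [← pow_mul, ← pow_add, ← pow_add, add_comm r, hs]
    rw [hgeom, fwdDiff_iter_mul_pow]
    calc a ^ r * (a ^ (p - 1)) ^ k * (a ^ (p - 1) - 1) ^ e
        = a ^ s * (a ^ (p - 1) * a - a) ^ e := by
          rw [hexp, show a ^ (p - 1) * a - a = a * (a ^ (p - 1) - 1) by ring, mul_pow, mul_assoc]
      _ = 0 := by rw [pow_sub_one_mul hp0, ZMod.pow_sub_self_pow_eq_zero, mul_zero]
  have hL (x : ℕ) : L (expPair x) = 0 := by
    change Δ_[1] ^[e] ((fun k ↦ (3 * x + 1 : ZMod (p ^ e)) ^ ((p - 1) * k + r)) +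
      fun k ↦ (3 * x + 2 : ZMod (p ^ e)) ^ ((p - 1) * k + r)) k = 0
    rw [fwdDiff_iter_add, Pi.add_apply, hpow, hpow, add_zero]
  change L (approxSeq h N) = 0
  rw [map_approxSeq]
  simp [hL, fwdDiff_iter_eq_sum_shift]


/-- The solution of `coshConv u = fun n ↦ 0 ^ n` at `0, 2, …, 34`, modulo `5⁷`. -/
def evenTermsMod : List (ZMod (5 ^ 7)) :=
  [1, 78123, 22, 77523, 30742, 55123, 20787, 30373, 36907, 27773, 40227, 29948, 6247, 71398, 77967,
    66623, 62762, 44498]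

theorem eq_evenTermsMod {u : ℕ → ZMod (5 ^ 7)} (hu0 : u 0 = 1)
    (hu : ∀ n, 1 ≤ n →
      u n = -2 * ∑ i ∈ Icc 1 (n / 2), (n.choose (2 * i) : ZMod (5 ^ 7)) * u (n - 2 * i)) :
    ∀ j < 18, u (2 * j) = evenTermsMod.getD j 0 := by
  have hcheck : ∀ j < 18, 0 < j → evenTermsMod.getD j 0 =
      -2 * ∑ i ∈ Icc 1 j, ((2 * j).choose (2 * i) : ZMod (5 ^ 7)) * evenTermsMod.getD (j - i) 0 :=
    by decide
  intro j
  induction j using Nat.strong_induction_on with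
  | _ j ih =>
    intro hj
    rcases Nat.eq_zero_or_pos j with rfl | hj0
    · exact hu0
    rw [hu _ (by omega), hcheck j hj hj0, Nat.mul_div_cancel_left _ two_pos]
    refine congrArg _ (sum_congr rfl fun i hi ↦ ?_)
    simp only [mem_Icc] at hi
    rw [← Nat.mul_sub, ih _ (by omega) (by omega)]

theorem one_add_five_pow_mul_eq_sum_mul_pow {u : ℕ → ZMod (5 ^ 7)} (hu0 : u 0 = 1)
    (hu : ∀ n, 1 ≤ n →
      u n = -2 * ∑ i ∈ Icc 1 (n / 2), (n.choose (2 * i) : ZMod (5 ^ 7)) * u (n - 2 * i))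
    {s : ℕ} (hs : s ≤ 1) (c : ℕ → ZMod (5 ^ 7))
    (hc : ∀ k < 9, (1 + 5 ^ (2 * (2 * k + s))) * evenTermsMod.getD (2 * k + s) 0 =
      ∑ j ∈ range 7, c j * (k : ZMod (5 ^ 7)) ^ j)
    (k : ℕ) :
    (1 + 5 ^ (4 * k + 2 * s)) * u (4 * k + 2 * s) =
      ∑ j ∈ range 7, c j * (k : ZMod (5 ^ 7)) ^ j := by
  have h5 {n : ℕ} (hn : 7 ≤ n) : (1 + 5 ^ n : ZMod (5 ^ 7)) = 1 := by
    rw [pow_eq_zero_of_le hn (by decide), add_zero]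
  have hvals (k : ℕ) (hk : k < 9) : u (4 * k + 2 * s) = evenTermsMod.getD (2 * k + s) 0 := by
    rw [show 4 * k + 2 * s = 2 * (2 * k + s) by ring, eq_evenTermsMod hu0 hu _ (by omega)]
  rcases lt_or_ge k 2 with hk | hk
  · rw [hvals k (by omega), show 4 * k + 2 * s = 2 * (2 * k + s) by ring, hc k (by omega)]
  rw [h5 (by omega), one_mul]
  refine eq_sum_mul_pow_of_fwdDiff_iter_eq_zero (f := fun k ↦ u (4 * k + 2 * s)) c
    (fun k hk ↦ ?_) (fun k hk ↦ ?_) k hk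
  · have : Fact (Nat.Prime 5) := ⟨by norm_num⟩
    -- `39063 = 2⁻¹` in `ZMod (5 ^ 7)`, and `5 ^ 7 ∣ 30!`.
    rw [eq_approxSeq (h := (39063 : ZMod (5 ^ 7))) (N := 30) (by decide) (by decide) hu0 hu]
    exact fwdDiff_iter_approxSeq_comp_eq_zero (p := 5) _ _ _ _ (by omega)
  · rw [hvals _ (by omega), ← hc _ (by omega), h5 (by omega), one_mul]

/-- Lemma 3.3: congruences for `(1+5^{4k})U_{4k}` and
`(1+5^{4k+2})U_{4k+2}` modulo `5^7`. -/
theorem stmt_10 (U : ℕ → ℤ) (hU0 : U 0 = 1)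
    (hU : ∀ n : ℕ, 1 ≤ n →
      U n = -2 * ∑ i ∈ Finset.Icc 1 (n / 2), (n.choose (2 * i) : ℤ) * U (n - 2 * i))
    (k : ℕ) :
    ((1 + 5 ^ (4 * k)) * U (4 * k) ≡
      6250 * (k : ℤ) ^ 6 + 50625 * (k : ℤ) ^ 5 + 51250 * (k : ℤ) ^ 4
        + 59875 * (k : ℤ) ^ 3 + 72600 * (k : ℤ) ^ 2 + 7545 * (k : ℤ) + 2
      [ZMOD 5 ^ 7]) ∧
    ((1 + 5 ^ (4 * k + 2)) * U (4 * k + 2) ≡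
      59375 * (k : ℤ) ^ 6 + 40625 * (k : ℤ) ^ 5 + 10625 * (k : ℤ) ^ 4
        + 48875 * (k : ℤ) ^ 3 + 5575 * (k : ℤ) ^ 2 + 37500 * (k : ℤ) - 52
      [ZMOD 5 ^ 7]) := by
  set u : ℕ → ZMod (5 ^ 7) := fun n ↦ (U n : ZMod (5 ^ 7))
  have hu0 : u 0 = 1 := by simp [u, hU0]
  have hu (n : ℕ) (hn : 1 ≤ n) :
      u n = -2 * ∑ i ∈ Icc 1 (n / 2), (n.choose (2 * i) : ZMod (5 ^ 7)) * u (n - 2 * i) := by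
    simp only [u, hU n hn]
    push_cast
    rfl
  rw [show (5 : ℤ) ^ 7 = ((5 ^ 7 : ℕ) : ℤ) by norm_num, ← ZMod.intCast_eq_intCast_iff,
    ← ZMod.intCast_eq_intCast_iff]
  push_cast
  constructor
  · change (1 + 5 ^ (4 * k + 2 * 0)) * u (4 * k + 2 * 0) = _
    rw [one_add_five_pow_mul_eq_sum_mul_pow hu0 hu (Nat.zero_le 1)
      (fun j ↦ [2, 7545, 72600, 59875, 51250, 50625, 6250].getD j 0) (by decide)]
    simp only [sum_range_succ, sum_range_zero, List.getD_cons_succ, List.getD_cons_zero]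
    ring
  · change (1 + 5 ^ (4 * k + 2 * 1)) * u (4 * k + 2 * 1) = _
    rw [one_add_five_pow_mul_eq_sum_mul_pow hu0 hu le_rfl
      (fun j ↦ [-52, 37500, 5575, 48875, 10625, 40625, 59375].getD j 0) (by decide)]
    simp only [sum_range_succ, sum_range_zero, List.getD_cons_succ, List.getD_cons_zero]
    ring
end

section
/- For every nonnegative integer k, (1 - 5^{4k}) E_{4k} ≡ 31250k^6 + 11875k^5 + 18750k^4 + 64875k^3 + 54500k^2 + 50005k (mod 5^7) and (1 - 5^{4k+2}) E_{4k+2} ≡ 31250k^6 + 10625k^5 + 68750k^4 + 60375k^3 + 4625k^2 + 74290k + 24 (mod 5^7). -/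
/-!
Put `P_n(x) = ∑ᵢ C(n, i) Eᵢ x^(n-i)`. The defining relations of the Euler numbers amount to
`P_m(1) + P_m(-1) = 2 [m = 0]`, and since `(P_n)` is an Appell sequence this gives
`P_n(x + 1) + P_n(x - 1) = 2 xⁿ`. Telescoping yields `2 ∑_{j<M} (-1)ʲ (2j+1)ⁿ = E_n + P_n(2M)` for
odd `M`, while `P_n(x) ≡ E_n (mod x²)` for even `n` because `E_{n-1} = 0`. Using this for
`M = 625` and for `M = 125` (multiplied by `5ⁿ`) shows that `(1 - 5ⁿ) E_n` is congruent modulo `5⁷`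
to the alternating sum of `uⁿ` over the odd `u < 1250` prime to `5`.

For `n = 4k + r` write `u^(4k) = (1 + (u⁴ - 1))^k`; as `5 ∣ u⁴ - 1`, the binomial expansion may be
cut after seven terms, so the sum is `∑_{i<7} C(k, i) cᵢ` modulo `5⁷`. A finite computation shows
that `cᵢ` is congruent to the `i`-th forward difference at `0` of the claimed sextic, and Newton's
forward difference formula turns this into the value of the sextic at `k`.
-/

open Finset Function Polynomial fwdDiff

theorem Nat.choose_mul_choose_sub_comm (n i j : ℕ) :
    n.choose i * (n - i).choose j = n.choose j * (n - j).choose i := by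
  have hi := Nat.choose_mul (n := n) (Nat.le_add_right i j)
  have hj := Nat.choose_mul (n := n) (Nat.le_add_left j i)
  rw [Nat.add_sub_cancel_left, Nat.choose_symm_add] at hi
  rw [Nat.add_sub_cancel] at hj
  rw [← hi, ← hj]

theorem Nat.mod_eq_of_two_mul_add_one_dvd {t j : ℕ} (h : 2 * t + 1 ∣ 2 * j + 1) :
    j % (2 * t + 1) = t := by
  obtain ⟨c, hc⟩ := h
  obtain ⟨d, rfl⟩ : Odd c := (Nat.odd_mul.mp (hc ▸ odd_two_mul_add_one j)).2
  rw [show j = (2 * t + 1) * d + t by linarith, Nat.mul_add_mod, Nat.mod_eq_of_lt (by omega)]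

theorem Finset.sum_range_two_mul_add_one_eq_sum_even {M : Type*} [AddCommMonoid M] (f : ℕ → M)
    (hf : ∀ i, f (2 * i + 1) = 0) (N : ℕ) :
    ∑ i ∈ range (2 * N + 1), f i = ∑ r ∈ range (N + 1), f (2 * r) := by
  induction N with
  | zero => simp
  | succ N ih =>
    rw [show 2 * (N + 1) + 1 = 2 * N + 1 + 1 + 1 by ring, sum_range_succ, sum_range_succ, ih,
      hf N, sum_range_succ (n := N + 1), add_zero]
    rfl

theorem one_add_pow_modEq_sum_range {a x : ℤ} (hx : a ∣ x) (k N : ℕ) :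
    (1 + x) ^ k ≡ ∑ i ∈ range N, (k.choose i : ℤ) * x ^ i [ZMOD a ^ N] := by
  have hexp : (1 + x) ^ k = ∑ i ∈ range (N + (k + 1)), (k.choose i : ℤ) * x ^ i := by
    rw [eventually_constant_sum (fun i hi => by simp [Nat.choose_eq_zero_of_lt hi])
      (Nat.le_add_left (k + 1) N), add_comm, add_pow]
    simp [mul_comm]
  have htail : a ^ N ∣ ∑ i ∈ range (k + 1), (k.choose (N + i) : ℤ) * x ^ (N + i) :=
    dvd_sum fun i _ => dvd_mul_of_dvd_right
      ((pow_dvd_pow_of_dvd hx N).trans (pow_dvd_pow x (Nat.le_add_right N i))) _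
  rw [hexp, sum_range_add]
  simpa using
    (Int.modEq_zero_iff_dvd.mpr htail).add_left (∑ i ∈ range N, (k.choose i : ℤ) * x ^ i)

theorem eq_sum_range_choose_smul_fwdDiff_iter {G : Type*} [AddCommGroup G] {f : ℤ → G} {N : ℕ}
    (hf : Δ_[1] ^[N] f = 0) (k : ℕ) :
    f k = ∑ i ∈ range N, k.choose i • Δ_[1] ^[i] f 0 := by
  have hvanish : ∀ i ≥ N, Δ_[1] ^[i] f = 0 := fun i hi => by
    rw [← Nat.sub_add_cancel hi, iterate_add_apply, hf]
    exact iterate_fixed (fwdDiff_const 1 0) _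
  have hchoose := eventually_constant_sum (u := fun i => k.choose i • Δ_[1] ^[i] f 0)
    (fun i hi => by simp [Nat.choose_eq_zero_of_lt hi]) (Nat.le_add_left (k + 1) N)
  have hdiff := eventually_constant_sum (u := fun i => k.choose i • Δ_[1] ^[i] f 0)
    (fun i hi => by simp [hvanish i hi]) (Nat.le_add_right N (k + 1))
  simpa [hchoose, ← hdiff] using shift_eq_sum_fwdDiff_iter 1 f k 0

theorem fwdDiff_iter_seven_sextic (a b c d e f g : ℤ) :
    Δ_[1] ^[7] (fun x : ℤ => a * x ^ 6 + b * x ^ 5 + c * x ^ 4 + d * x ^ 3 + e * x ^ 2 + f * x + g)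
      = 0 := by
  have hP : (fun x : ℤ => a * x ^ 6 + b * x ^ 5 + c * x ^ 4 + d * x ^ 3 + e * x ^ 2 + f * x + g) =
      (C a * X ^ 6 + C b * X ^ 5 + C c * X ^ 4 + C d * X ^ 3 + C e * X ^ 2 + C f * X + C g).eval :=
    funext fun x => by simp
  rw [hP]
  exact fwdDiff_iter_eq_zero_of_degree_lt (Nat.lt_succ_of_le (by compute_degree))

section Appell

variable {R : Type*} [CommRing R]

-- For the Euler numbers this is `2 ^ n * E_n((x + 1) / 2)`, with `E_n` the `n`-th Euler polynomial.
def appellPoly (a : ℕ → R) (n : ℕ) (x : R) : R :=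
  ∑ i ∈ range (n + 1), (n.choose i : R) * a i * x ^ (n - i)

theorem appellPoly_zero_right (a : ℕ → R) (n : ℕ) : appellPoly a n 0 = a n := by
  rw [appellPoly, sum_range_succ, sum_eq_zero fun i hi => ?_]
  · simp
  · rw [zero_pow (by grind), mul_zero]

theorem appellPoly_add (a : ℕ → R) (n : ℕ) (x y : R) :
    appellPoly a n (x + y) =
      ∑ j ∈ range (n + 1), (n.choose j : R) * x ^ j * appellPoly a (n - j) y := by
  simp only [appellPoly, add_pow, mul_sum]
  rw [sum_comm' (t' := range (n + 1)) (s' := fun j => range (n - j + 1))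
    (fun i j => by simp only [mem_range]; omega)]
  refine sum_congr rfl fun j _ => sum_congr rfl fun i _ => ?_
  have hchoose := congrArg (Nat.cast : ℕ → R) (Nat.choose_mul_choose_sub_comm n i j)
  push_cast at hchoose
  rw [show n - i - j = n - j - i by omega]
  linear_combination (a i * x ^ j * y ^ (n - j - i)) * hchoose

end Appell

def altOddPowSum (n M : ℕ) : ℤ := ∑ j ∈ range M, (-1) ^ j * (2 * (j : ℤ) + 1) ^ n

def altOddPowSumCoprime (q n M : ℕ) : ℤ :=
  ∑ j ∈ range M with ¬ q ∣ 2 * j + 1, (-1) ^ j * (2 * (j : ℤ) + 1) ^ n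

theorem altOddPowSum_mul (q n M : ℕ) (hq : Odd q) :
    altOddPowSum n (q * M) =
      altOddPowSumCoprime q n (q * M) + (-1) ^ (q / 2) * (q : ℤ) ^ n * altOddPowSum n M := by
  rw [altOddPowSum, ← sum_filter_not_add_sum_filter _ (fun j => q ∣ 2 * j + 1),
    altOddPowSumCoprime, altOddPowSum, mul_sum]
  congr 1
  obtain ⟨t, rfl⟩ := hq
  have ht : (2 * t + 1) / 2 = t := by omega
  symm
  -- `j = q m + (q - 1) / 2` is the index with `2 j + 1 = q (2 m + 1)`
  refine sum_nbij' (fun m => (2 * t + 1) * m + t) (fun j => j / (2 * t + 1)) ?_ ?_ ?_ ?_ ?_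
  · intro m hm
    simp only [mem_range, mem_filter] at hm ⊢
    exact ⟨by nlinarith, ⟨2 * m + 1, by ring⟩⟩
  · intro j hj
    simp only [mem_range, mem_filter] at hj ⊢
    exact Nat.div_lt_of_lt_mul hj.1
  · intro m _
    rw [Nat.mul_add_div (by omega), Nat.div_eq_of_lt (by omega), add_zero]
  · intro j hj
    have := Nat.div_add_mod j (2 * t + 1)
    rwa [Nat.mod_eq_of_two_mul_add_one_dvd (mem_filter.mp hj).2] at this
  · intro m _
    rw [ht]
    push_cast
    rw [show 2 * ((2 * (t : ℤ) + 1) * m + t) + 1 = (2 * t + 1) * (2 * m + 1) by ring, mul_pow,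
      pow_add, pow_mul, (odd_two_mul_add_one t).neg_one_pow]
    ring

structure IsEulerNumbers (E : ℕ → ℤ) : Prop where
  zero : E 0 = 1
  odd : ∀ n : ℕ, 1 ≤ n → E (2 * n - 1) = 0
  sum_even : ∀ n : ℕ, 1 ≤ n →
    ∑ r ∈ range (n + 1), ((2 * n).choose (2 * r) : ℤ) * E (2 * r) = 0

namespace IsEulerNumbers

variable {E : ℕ → ℤ} (hE : IsEulerNumbers E)
include hE

theorem eq_zero_of_odd {i : ℕ} (hi : Odd i) : E i = 0 := by
  obtain ⟨r, rfl⟩ := hi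
  simpa [Nat.mul_add] using hE.odd (r + 1) (by omega)

theorem appellPoly_one {m : ℕ} (hm : Even m) (hm0 : m ≠ 0) : appellPoly E m 1 = 0 := by
  obtain ⟨N, rfl⟩ := hm
  rw [← two_mul] at hm0 ⊢
  simp only [appellPoly, one_pow, mul_one]
  rw [sum_range_two_mul_add_one_eq_sum_even _
    (fun i => by rw [hE.eq_zero_of_odd ⟨i, rfl⟩, mul_zero]), hE.sum_even N (by omega)]

theorem appellPoly_neg_one (m : ℕ) : appellPoly E m (-1) = (-1) ^ m * appellPoly E m 1 := by
  simp only [appellPoly, one_pow, mul_one, mul_sum]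
  refine sum_congr rfl fun i hi => ?_
  rcases Nat.even_or_odd i with hi2 | hi2
  · rw [← Nat.sub_add_cancel (mem_range_succ_iff.mp hi), pow_add, hi2.neg_one_pow,
      Nat.add_sub_cancel]
    ring
  · rw [hE.eq_zero_of_odd hi2]
    ring

theorem appellPoly_one_add_appellPoly_neg_one (m : ℕ) :
    appellPoly E m 1 + appellPoly E m (-1) = if m = 0 then 2 else 0 := by
  rw [hE.appellPoly_neg_one]
  split_ifs with hm0
  · simp [hm0, appellPoly, hE.zero]
  rcases Nat.even_or_odd m with hm | hm
  · simp [hE.appellPoly_one hm hm0]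
  · rw [hm.neg_one_pow]
    ring

theorem appellPoly_add_one_add_appellPoly_sub_one (n : ℕ) (x : ℤ) :
    appellPoly E n (x + 1) + appellPoly E n (x - 1) = 2 * x ^ n := by
  rw [sub_eq_add_neg, appellPoly_add, appellPoly_add, ← sum_add_distrib]
  simp_rw [← mul_add, hE.appellPoly_one_add_appellPoly_neg_one]
  rw [sum_eq_single n (fun j hj hjn => by grind) (by simp)]
  simp [mul_comm]

theorem two_mul_altOddPowSum (n M : ℕ) :
    2 * altOddPowSum n M = E n - (-1) ^ M * appellPoly E n (2 * M) := by
  induction M with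
  | zero => simp [altOddPowSum, appellPoly_zero_right]
  | succ M ih =>
    have hstep := hE.appellPoly_add_one_add_appellPoly_sub_one n (2 * M + 1)
    rw [show (2 * M + 1 : ℤ) + 1 = 2 * (M + 1 : ℕ) by push_cast; ring,
      show (2 * M + 1 : ℤ) - 1 = 2 * M by ring] at hstep
    rw [altOddPowSum, sum_range_succ, mul_add, ← altOddPowSum, ih, pow_succ]
    linear_combination -(-1) ^ M * hstep

theorem sq_dvd_appellPoly_sub {n : ℕ} (hn : Even n) (x : ℤ) :
    x ^ 2 ∣ appellPoly E n x - E n := by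
  rw [appellPoly, sum_range_succ, Nat.choose_self, Nat.sub_self]
  simp only [Nat.cast_one, one_mul, pow_zero, mul_one, add_sub_cancel_right]
  refine dvd_sum fun i hi => ?_
  rcases (show n - i = 1 ∨ 2 ≤ n - i by grind) with h1 | h2
  · rw [hE.eq_zero_of_odd (show Odd i by grind)]
    simp
  · exact dvd_mul_of_dvd_right (pow_dvd_pow x h2) _

theorem one_sub_five_pow_mul_modEq {n : ℕ} (hn : Even n) :
    (1 - 5 ^ n) * E n ≡ altOddPowSumCoprime 5 n 625 [ZMOD 5 ^ 7] := by
  have h625 : 2 * altOddPowSum n 625 = E n + appellPoly E n 1250 := by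
    norm_num [hE.two_mul_altOddPowSum n 625]
  have h125 : 2 * altOddPowSum n 125 = E n + appellPoly E n 250 := by
    norm_num [hE.two_mul_altOddPowSum n 125]
  have hsplit :
      altOddPowSum n 625 = altOddPowSumCoprime 5 n 625 + 5 ^ n * altOddPowSum n 125 := by
    simpa using altOddPowSum_mul 5 n 125 (by decide)
  have hdvd625 : (5 : ℤ) ^ 7 ∣ appellPoly E n 1250 - E n :=
    (by norm_num : (5 : ℤ) ^ 7 ∣ 1250 ^ 2).trans (hE.sq_dvd_appellPoly_sub hn 1250)
  have hdvd125 : (5 : ℤ) ^ 7 ∣ 5 ^ n * (appellPoly E n 250 - E n) := by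
    rcases n.eq_zero_or_pos with rfl | hpos
    · simp [appellPoly]
    · exact (by norm_num : (5 : ℤ) ^ 7 ∣ 5 * 250 ^ 2).trans
        (mul_dvd_mul (dvd_pow_self 5 hpos.ne') (hE.sq_dvd_appellPoly_sub hn 250))
  have hcop : IsCoprime ((5 : ℤ) ^ 7) 2 := by norm_num [Int.isCoprime_iff_gcd_eq_one]
  refine Int.modEq_iff_dvd.mpr (hcop.dvd_of_dvd_mul_left ?_)
  have : 2 * (altOddPowSumCoprime 5 n 625 - (1 - 5 ^ n) * E n) =
      (appellPoly E n 1250 - E n) - 5 ^ n * (appellPoly E n 250 - E n) := by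
    linear_combination (-2) * hsplit + h625 - 5 ^ n * h125
  rw [this]
  exact dvd_sub hdvd625 hdvd125

end IsEulerNumbers

-- Expanding `u ^ (4 k) = (1 + (u ^ 4 - 1)) ^ k` with `u = 2 j + 1` gives exactly
-- `altOddPowSumCoprime 5 (4 k + r) 625 = ∑ i ∈ range (k + 1), k.choose i * mahlerCoeff r i`.
def mahlerCoeff (r i : ℕ) : ℤ :=
  ∑ j ∈ range 625 with ¬ 5 ∣ 2 * j + 1,
    (-1) ^ j * (2 * (j : ℤ) + 1) ^ r * ((2 * (j : ℤ) + 1) ^ 4 - 1) ^ i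

theorem altOddPowSumCoprime_four_mul_add_modEq (r k : ℕ) :
    altOddPowSumCoprime 5 (4 * k + r) 625 ≡
      ∑ i ∈ range 7, (k.choose i : ℤ) * mahlerCoeff r i [ZMOD 5 ^ 7] := by
  have hfermat (j : ℕ) (hj : ¬ 5 ∣ 2 * j + 1) : (5 : ℤ) ∣ (2 * (j : ℤ) + 1) ^ 4 - 1 := by
    have hcop : Nat.Coprime (2 * j + 1) 5 :=
      ((Nat.Prime.coprime_iff_not_dvd Nat.prime_five).mpr hj).symm
    have := Int.prime_dvd_pow_sub_one Nat.prime_five (Nat.isCoprime_iff_coprime.mpr hcop)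
    exact_mod_cast this
  calc altOddPowSumCoprime 5 (4 * k + r) 625
      = ∑ j ∈ range 625 with ¬ 5 ∣ 2 * j + 1,
          (-1) ^ j * (2 * (j : ℤ) + 1) ^ r * (1 + ((2 * (j : ℤ) + 1) ^ 4 - 1)) ^ k := by
        refine sum_congr rfl fun j _ => ?_
        rw [add_sub_cancel, ← pow_mul, pow_add]
        ring
    _ ≡ ∑ j ∈ range 625 with ¬ 5 ∣ 2 * j + 1, (-1) ^ j * (2 * (j : ℤ) + 1) ^ r *
          ∑ i ∈ range 7, (k.choose i : ℤ) * ((2 * (j : ℤ) + 1) ^ 4 - 1) ^ i [ZMOD 5 ^ 7] :=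
        Int.ModEq.sum fun j hj =>
          (one_add_pow_modEq_sum_range (hfermat j (mem_filter.mp hj).2) k 7).mul_left _
    _ = ∑ i ∈ range 7, (k.choose i : ℤ) * mahlerCoeff r i := by
        simp only [mahlerCoeff, mul_sum]
        rw [sum_comm]
        exact sum_congr rfl fun i _ => sum_congr rfl fun j _ => by ring

theorem IsEulerNumbers.modEq_of_fwdDiff_iter {E : ℕ → ℤ} (hE : IsEulerNumbers E) {r : ℕ}
    (hr : Even r) {f : ℤ → ℤ} (hf : Δ_[1] ^[7] f = 0)
    (hcoeff : ∀ i < 7, mahlerCoeff r i ≡ Δ_[1] ^[i] f 0 [ZMOD 5 ^ 7]) (k : ℕ) :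
    (1 - 5 ^ (4 * k + r)) * E (4 * k + r) ≡ f k [ZMOD 5 ^ 7] :=
  calc (1 - 5 ^ (4 * k + r)) * E (4 * k + r)
      ≡ altOddPowSumCoprime 5 (4 * k + r) 625 [ZMOD 5 ^ 7] :=
        hE.one_sub_five_pow_mul_modEq ((show Even (4 * k) from ⟨2 * k, by ring⟩).add hr)
    _ ≡ ∑ i ∈ range 7, (k.choose i : ℤ) * mahlerCoeff r i [ZMOD 5 ^ 7] :=
        altOddPowSumCoprime_four_mul_add_modEq r k
    _ ≡ ∑ i ∈ range 7, (k.choose i : ℤ) * Δ_[1] ^[i] f 0 [ZMOD 5 ^ 7] :=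
        Int.ModEq.sum fun i hi => (hcoeff i (mem_range.mp hi)).mul_left _
    _ = f k := by simp [eq_sum_range_choose_smul_fwdDiff_iter hf k]

def congrPoly₀ (x : ℤ) : ℤ :=
  31250 * x ^ 6 + 11875 * x ^ 5 + 18750 * x ^ 4 + 64875 * x ^ 3 + 54500 * x ^ 2 + 50005 * x

def congrPoly₂ (x : ℤ) : ℤ :=
  31250 * x ^ 6 + 10625 * x ^ 5 + 68750 * x ^ 4 + 60375 * x ^ 3 + 4625 * x ^ 2 + 74290 * x + 24

theorem fwdDiff_iter_seven_congrPoly₀ : Δ_[1] ^[7] congrPoly₀ = 0 := by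
  unfold congrPoly₀
  simpa using fwdDiff_iter_seven_sextic 31250 11875 18750 64875 54500 50005 0

theorem fwdDiff_iter_seven_congrPoly₂ : Δ_[1] ^[7] congrPoly₂ = 0 :=
  fwdDiff_iter_seven_sextic 31250 10625 68750 60375 4625 74290 24

theorem mahlerCoeff_zero_modEq :
    ∀ i < 7, mahlerCoeff 0 i ≡ Δ_[1] ^[i] congrPoly₀ 0 [ZMOD 5 ^ 7] := by
  decide +kernel

theorem mahlerCoeff_two_modEq :
    ∀ i < 7, mahlerCoeff 2 i ≡ Δ_[1] ^[i] congrPoly₂ 0 [ZMOD 5 ^ 7] := by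
  decide +kernel

/-- Lemma 4.1: congruences for `(1-5^{4k})E_{4k}` and
`(1-5^{4k+2})E_{4k+2}` modulo `5^7`, where `E_n` are the Euler numbers. -/
theorem stmt_11 (E : ℕ → ℤ) (hE0 : E 0 = 1)
    (hEodd : ∀ n : ℕ, 1 ≤ n → E (2 * n - 1) = 0)
    (hEsum : ∀ n : ℕ, 1 ≤ n →
      ∑ r ∈ Finset.range (n + 1), ((2 * n).choose (2 * r) : ℤ) * E (2 * r) = 0)
    (k : ℕ) :
    ((1 - 5 ^ (4 * k)) * E (4 * k) ≡
      31250 * (k : ℤ) ^ 6 + 11875 * (k : ℤ) ^ 5 + 18750 * (k : ℤ) ^ 4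
        + 64875 * (k : ℤ) ^ 3 + 54500 * (k : ℤ) ^ 2 + 50005 * (k : ℤ)
      [ZMOD 5 ^ 7]) ∧
    ((1 - 5 ^ (4 * k + 2)) * E (4 * k + 2) ≡
      31250 * (k : ℤ) ^ 6 + 10625 * (k : ℤ) ^ 5 + 68750 * (k : ℤ) ^ 4
        + 60375 * (k : ℤ) ^ 3 + 4625 * (k : ℤ) ^ 2 + 74290 * (k : ℤ) + 24
      [ZMOD 5 ^ 7]) := by
  have hE : IsEulerNumbers E := ⟨hE0, hEodd, hEsum⟩
  exact
    ⟨hE.modEq_of_fwdDiff_iter Even.zero fwdDiff_iter_seven_congrPoly₀ mahlerCoeff_zero_modEq k,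
      hE.modEq_of_fwdDiff_iter even_two fwdDiff_iter_seven_congrPoly₂ mahlerCoeff_two_modEq k⟩
end

section
/- For every nonnegative integer k, (1 - 3^{2k}) S_{2k} ≡ 1620k^6 + 1620k^5 + 621k^4 + 981k^3 + 1179k^2 + 564k (mod 3^7) and (1 + 3^{2k+1}) S_{2k+1} ≡ 324k^6 + 2106k^5 + 1809k^4 + 1197k^3 + 549k^2 + 888k + 2183 (mod 3^7). -/
/-!
Modulo any odd `N`, `S n` agrees with the alternating power sum `∑_{m<N} (-1)^m (4m+1)^n`.
Doubling the recurrence gives `2 S_n = 2 - ∑_{i<n} C(n,i) 4^(n-i) S_i`, and the power sum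
satisfies the same relation: the binomial theorem turns `∑_i C(n,i) 4^(n-i) (4m+1)^i` into
`(4(m+1)+1)^n`, which telescopes against the sign `(-1)^m` because `4N+1 ≡ 1` and `(-1)^N = -1`.

For `N = 3^7` the sequences `(1 - 9^k) S_{2k}` and `(1 + 3·9^k) S_{2k+1}` thus become combinations
of geometric sequences `(y^2)^k` with `y = 4m+1` or `y = 3(4m+1)`. The seventh forward difference
of `(y^2)^k` is `(y^2-1)^7 (y^2)^k`, which vanishes mod `3^7` once `k ≥ 4`, since `3 ∣ y` or
`3 ∣ y^2 - 1`. The sextics on the right have vanishing seventh difference as well, so both sides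
agree for every `k` as soon as they agree for `k ≤ 10`, which is checked by computing
`S_0, …, S_21`.
-/

open Finset fwdDiff

def altPowSum (N n : ℕ) : ZMod N := ∑ m ∈ range N, (-1) ^ m * (4 * m + 1) ^ n

theorem sum_choose_mul_altPowSum {N : ℕ} (hN : Odd N) (n : ℕ) :
    ∑ i ∈ range (n + 1), (n.choose i : ZMod N) * 4 ^ (n - i) * altPowSum N i
      = 2 - altPowSum N n := by
  let u : ℕ → ZMod N := fun m ↦ (-1) ^ m * (4 * m + 1) ^ n
  have hshift (m : ℕ) : ∑ i ∈ range (n + 1), (n.choose i : ZMod N) * 4 ^ (n - i)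
      * ((-1) ^ m * (4 * m + 1) ^ i) = -u (m + 1) := by
    change _ = -((-1) ^ (m + 1) * (4 * ((m + 1 : ℕ) : ZMod N) + 1) ^ n)
    rw [Nat.cast_succ, show 4 * ((m : ZMod N) + 1) + 1 = (4 * m + 1) + 4 by ring, add_pow,
      mul_sum, ← sum_neg_distrib]
    exact sum_congr rfl fun i _ ↦ by ring
  have hlast : u N = -1 := by simp [u, hN.neg_one_pow]
  calc _ = ∑ m ∈ range N, -u (m + 1) := by
        simp only [altPowSum, mul_sum]
        rw [sum_comm]
        exact sum_congr rfl fun m _ ↦ hshift m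
    _ = 2 - altPowSum N n := by
        have h₁ := sum_range_succ' u N
        rw [sum_range_succ, hlast] at h₁
        simp only [altPowSum, sum_neg_distrib]
        simp only [u, pow_zero, Nat.cast_zero, mul_zero, zero_add, one_pow, mul_one] at h₁ ⊢
        linear_combination h₁

theorem ZMod.pow_eq_zero_of_cast_eq_zero {p e : ℕ} [NeZero p] {z : ZMod (p ^ e)}
    (hz : (z.cast : ZMod p) = 0) : z ^ e = 0 := by
  have : NeZero (p ^ e) := ⟨pow_ne_zero e (NeZero.ne p)⟩
  rw [ZMod.cast_eq_val, ZMod.natCast_eq_zero_iff] at hz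
  obtain ⟨t, ht⟩ := hz
  rw [← ZMod.natCast_zmod_val z, ht, Nat.cast_mul, mul_pow, ← Nat.cast_pow, ZMod.natCast_self,
    zero_mul]

theorem ZMod.pow_mul_pow_sub_one_sub_one_pow_eq_zero {p e : ℕ} [Fact p.Prime]
    (x : ZMod (p ^ e)) : x ^ e * (x ^ (p - 1) - 1) ^ e = 0 := by
  rcases Nat.eq_zero_or_pos e with rfl | he
  · exact Subsingleton.elim (α := ZMod 1) _ _
  by_cases hx : (x.cast : ZMod p) = 0
  · rw [pow_eq_zero_of_cast_eq_zero hx, zero_mul]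
  · have hcast : ((x ^ (p - 1) - 1 : ZMod (p ^ e)).cast : ZMod p) = 0 := by
      rw [← ZMod.castHom_apply (h := dvd_pow_self p he.ne'), map_sub, map_pow, map_one,
        ZMod.castHom_apply, ZMod.pow_card_sub_one_eq_one hx, sub_self]
    rw [pow_eq_zero_of_cast_eq_zero hcast, mul_zero]

theorem fwdDiff_iter_sum_mul_pow {R ι : Type*} [CommRing R] (s : Finset ι) (c r : ι → R)
    (n : ℕ) :
    Δ_[1] ^[n] (fun k : ℕ ↦ ∑ i ∈ s, c i * r i ^ k)
      = fun k ↦ ∑ i ∈ s, c i * (r i - 1) ^ n * r i ^ k := by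
  induction n with
  | zero => simp
  | succ n ih =>
    rw [Function.iterate_succ_apply', ih]
    funext k
    simp only [fwdDiff, ← sum_sub_distrib]
    exact sum_congr rfl fun i _ ↦ by ring

theorem eq_of_fwdDiff_iter_eq_zero {G : Type*} [AddCommGroup G] {f g : ℕ → G} {n N : ℕ}
    (hf : ∀ k, N ≤ k → Δ_[1] ^[n] f k = 0) (hg : ∀ k, N ≤ k → Δ_[1] ^[n] g k = 0)
    (hfg : ∀ k < N + n, f k = g k) : f = g := by
  funext k
  induction k using Nat.strong_induction_on with
  | _ k ih =>
  by_cases hk : k < N + n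
  · exact hfg k hk
  obtain ⟨j, rfl⟩ : ∃ j, k = j + n := ⟨k - n, by omega⟩
  have hdiff : Δ_[1] ^[n] f j = Δ_[1] ^[n] g j := by rw [hf j (by omega), hg j (by omega)]
  simp only [fwdDiff_iter_eq_sum_shift, sum_range_succ, Nat.sub_self, pow_zero, Nat.choose_self,
    smul_eq_mul, Nat.cast_one, mul_one, one_smul] at hdiff
  rw [sum_congr rfl fun i hi ↦ by rw [ih _ (by have := mem_range.1 hi; omega)]] at hdiff
  simpa using hdiff

theorem Int.modEq_of_fwdDiff_iter_eq_zero {m n N : ℕ} {f g : ℕ → ℤ}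
    (hf : ∀ k, N ≤ k → Δ_[1] ^[n] (fun k ↦ (f k : ZMod m)) k = 0)
    (hg : ∀ k, N ≤ k → Δ_[1] ^[n] (fun k ↦ (g k : ZMod m)) k = 0)
    (hfg : ∀ k < N + n, f k ≡ g k [ZMOD m]) (k : ℕ) : f k ≡ g k [ZMOD m] :=
  (ZMod.intCast_eq_intCast_iff _ _ _).1 <| congrFun (eq_of_fwdDiff_iter_eq_zero hf hg
    fun k hk ↦ (ZMod.intCast_eq_intCast_iff _ _ _).2 (hfg k hk)) k

theorem fwdDiff_iter_seven_apply {R : Type*} [CommRing R] (f : ℕ → R) (k : ℕ) :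
    Δ_[1] ^[7] f k = f (k + 7) - 7 * f (k + 6) + 21 * f (k + 5) - 35 * f (k + 4)
      + 35 * f (k + 3) - 21 * f (k + 2) + 7 * f (k + 1) - f k := by
  simp only [fwdDiff_iter_eq_sum_shift, sum_range_succ, sum_range_zero, Nat.choose,
    Nat.reduceAdd, Nat.reduceSub, zsmul_eq_mul, smul_eq_mul, mul_one, add_zero]
  push_cast
  ring

theorem fwdDiff_iter_seven_sum_mul_sq_pow_eq_zero {ι : Type*} (s : Finset ι)
    (c y : ι → ZMod (3 ^ 7)) {k : ℕ} (hk : 4 ≤ k) :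
    Δ_[1] ^[7] (fun k : ℕ ↦ ∑ i ∈ s, c i * (y i ^ 2) ^ k) k = 0 := by
  rw [fwdDiff_iter_sum_mul_pow]
  refine sum_eq_zero fun i _ ↦ ?_
  have hpow : (y i ^ 2) ^ k = y i ^ (2 * k - 7) * y i ^ 7 := by
    rw [← pow_mul, ← pow_add, Nat.sub_add_cancel (by omega)]
  have := ZMod.pow_mul_pow_sub_one_sub_one_pow_eq_zero (p := 3) (y i)
  rw [hpow]
  linear_combination (c i * y i ^ (2 * k - 7)) * this

structure SRecurrence (S : ℕ → ℤ) : Prop where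
  zero : S 0 = 1
  succ : ∀ n : ℕ, 1 ≤ n →
    S n = 1 - ∑ i ∈ range n, (n.choose i : ℤ) * 2 ^ (2 * n - 2 * i - 1) * S i

-- Structural recursion, so that the kernel can evaluate it with `decide`.
def prefixValues : ℕ → List ℤ
  | 0 => []
  | n + 1 => prefixValues n ++
      [1 - ∑ i ∈ range n, (n.choose i : ℤ) * 2 ^ (2 * n - 2 * i - 1) * (prefixValues n).getD i 0]

theorem length_prefixValues (n : ℕ) : (prefixValues n).length = n := by
  induction n with
  | zero => rfl
  | succ n ih => simp [prefixValues, ih]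

namespace SRecurrence

variable {S : ℕ → ℤ}

theorem eq_one_sub_sum (h : SRecurrence S) (n : ℕ) :
    S n = 1 - ∑ i ∈ range n, (n.choose i : ℤ) * 2 ^ (2 * n - 2 * i - 1) * S i := by
  rcases Nat.eq_zero_or_pos n with rfl | hn
  · simp [h.zero]
  · exact h.succ n hn

theorem two_mul_eq_two_sub_sum (h : SRecurrence S) (n : ℕ) :
    2 * S n = 2 - ∑ i ∈ range n, (n.choose i : ℤ) * 4 ^ (n - i) * S i := by
  rw [h.eq_one_sub_sum n, mul_sub, mul_one, mul_sum]
  congr 1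
  refine sum_congr rfl fun i hi ↦ ?_
  have : (4 : ℤ) ^ (n - i) = 2 ^ (2 * n - 2 * i - 1) * 2 := by
    rw [← pow_succ, show 2 * n - 2 * i - 1 + 1 = 2 * (n - i) by grind, pow_mul]
    norm_num
  rw [this]
  ring

theorem intCast_eq_altPowSum (h : SRecurrence S) {N : ℕ} (hN : Odd N) (n : ℕ) :
    (S n : ZMod N) = altPowSum N n := by
  induction n using Nat.strong_induction_on with
  | _ n ih =>
  have h2 : IsUnit (2 : ZMod N) := by
    exact_mod_cast (ZMod.isUnit_iff_coprime 2 N).2 hN.coprime_two_left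
  refine h2.mul_left_cancel ?_
  have hS := congrArg (Int.cast : ℤ → ZMod N) (h.two_mul_eq_two_sub_sum n)
  push_cast at hS
  rw [hS, sum_congr rfl fun i hi ↦ by rw [ih i (mem_range.1 hi)]]
  have := sum_choose_mul_altPowSum hN n
  rw [sum_range_succ, Nat.choose_self, Nat.sub_self] at this
  linear_combination -this

theorem getD_prefixValues (h : SRecurrence S) {n i : ℕ} (hi : i < n) :
    (prefixValues n).getD i 0 = S i := by
  induction n generalizing i with
  | zero => omega
  | succ n ih =>
    rw [prefixValues, List.getD_eq_getElem?_getD]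
    rcases Nat.lt_succ_iff_lt_or_eq.1 hi with hi | rfl
    · rw [List.getElem?_append_left (by rwa [length_prefixValues]), ← List.getD_eq_getElem?_getD,
        ih hi]
    · rw [List.getElem?_append_right (by rw [length_prefixValues]), length_prefixValues,
        Nat.sub_self, h.eq_one_sub_sum i]
      simp only [List.getElem?_cons_zero, Option.getD_some]
      exact congrArg _ (sum_congr rfl fun j hj ↦ by rw [ih (mem_range.1 hj)])

theorem fwdDiff_iter_even (h : SRecurrence S) {k : ℕ} (hk : 4 ≤ k) :
    Δ_[1] ^[7] (fun k ↦ (((1 - 3 ^ (2 * k)) * S (2 * k) : ℤ) : ZMod (3 ^ 7))) k = 0 := by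
  have hsplit : (fun k ↦ (((1 - 3 ^ (2 * k)) * S (2 * k) : ℤ) : ZMod (3 ^ 7)))
      = (fun k ↦ ∑ m ∈ range (3 ^ 7), ((-1) ^ m * ((4 * m + 1) ^ 2) ^ k : ZMod (3 ^ 7)))
        + fun k ↦ ∑ m ∈ range (3 ^ 7),
          (-(-1) ^ m * ((3 * (4 * m + 1)) ^ 2) ^ k : ZMod (3 ^ 7)) := by
    funext k
    rw [Pi.add_apply, ← sum_add_distrib, Int.cast_mul, h.intCast_eq_altPowSum (by decide),
      altPowSum, mul_sum]
    refine sum_congr rfl fun m _ ↦ ?_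
    push_cast
    simp only [← pow_mul, mul_pow]
    ring
  rw [hsplit, fwdDiff_iter_add, Pi.add_apply, fwdDiff_iter_seven_sum_mul_sq_pow_eq_zero _ _ _ hk,
    fwdDiff_iter_seven_sum_mul_sq_pow_eq_zero _ _ _ hk, add_zero]

theorem fwdDiff_iter_odd (h : SRecurrence S) {k : ℕ} (hk : 4 ≤ k) :
    Δ_[1] ^[7] (fun k ↦ (((1 + 3 ^ (2 * k + 1)) * S (2 * k + 1) : ℤ) : ZMod (3 ^ 7))) k = 0 := by
  have hsplit : (fun k ↦ (((1 + 3 ^ (2 * k + 1)) * S (2 * k + 1) : ℤ) : ZMod (3 ^ 7)))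
      = (fun k ↦ ∑ m ∈ range (3 ^ 7),
          ((-1) ^ m * (4 * m + 1) * ((4 * m + 1) ^ 2) ^ k : ZMod (3 ^ 7)))
        + fun k ↦ ∑ m ∈ range (3 ^ 7),
          (3 * (-1) ^ m * (4 * m + 1) * ((3 * (4 * m + 1)) ^ 2) ^ k : ZMod (3 ^ 7)) := by
    funext k
    rw [Pi.add_apply, ← sum_add_distrib, Int.cast_mul, h.intCast_eq_altPowSum (by decide),
      altPowSum, mul_sum]
    refine sum_congr rfl fun m _ ↦ ?_
    push_cast
    simp only [← pow_mul, mul_pow]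
    ring
  rw [hsplit, fwdDiff_iter_add, Pi.add_apply, fwdDiff_iter_seven_sum_mul_sq_pow_eq_zero _ _ _ hk,
    fwdDiff_iter_seven_sum_mul_sq_pow_eq_zero _ _ _ hk, add_zero]

theorem modEq_even (h : SRecurrence S) (k : ℕ) :
    (1 - 3 ^ (2 * k)) * S (2 * k) ≡
      1620 * (k : ℤ) ^ 6 + 1620 * (k : ℤ) ^ 5 + 621 * (k : ℤ) ^ 4
        + 981 * (k : ℤ) ^ 3 + 1179 * (k : ℤ) ^ 2 + 564 * (k : ℤ)
      [ZMOD 3 ^ 7] := by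
  revert k
  refine Int.modEq_of_fwdDiff_iter_eq_zero (m := 3 ^ 7) (N := 4) (n := 7)
    (fun _ ↦ h.fwdDiff_iter_even) (fun j _ ↦ ?_) fun j hj ↦ ?_
  · rw [fwdDiff_iter_seven_apply]
    push_cast
    ring
  · rw [← h.getD_prefixValues (n := 22) (by omega)]
    revert j
    decide

theorem modEq_odd (h : SRecurrence S) (k : ℕ) :
    (1 + 3 ^ (2 * k + 1)) * S (2 * k + 1) ≡
      324 * (k : ℤ) ^ 6 + 2106 * (k : ℤ) ^ 5 + 1809 * (k : ℤ) ^ 4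
        + 1197 * (k : ℤ) ^ 3 + 549 * (k : ℤ) ^ 2 + 888 * (k : ℤ) + 2183
      [ZMOD 3 ^ 7] := by
  revert k
  refine Int.modEq_of_fwdDiff_iter_eq_zero (m := 3 ^ 7) (N := 4) (n := 7)
    (fun _ ↦ h.fwdDiff_iter_odd) (fun j _ ↦ ?_) fun j hj ↦ ?_
  · rw [fwdDiff_iter_seven_apply]
    push_cast
    ring
  · rw [← h.getD_prefixValues (n := 22) (by omega)]
    revert j
    decide

end SRecurrence

/-- Lemma 5.1: congruences for `(1-3^{2k})S_{2k}` and
`(1+3^{2k+1})S_{2k+1}` modulo `3^7`. -/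
theorem stmt_12 (S : ℕ → ℤ) (hS0 : S 0 = 1)
    (hS : ∀ n : ℕ, 1 ≤ n →
      S n = 1 - ∑ i ∈ Finset.range n, (n.choose i : ℤ) * 2 ^ (2 * n - 2 * i - 1) * S i)
    (k : ℕ) :
    ((1 - 3 ^ (2 * k)) * S (2 * k) ≡
      1620 * (k : ℤ) ^ 6 + 1620 * (k : ℤ) ^ 5 + 621 * (k : ℤ) ^ 4
        + 981 * (k : ℤ) ^ 3 + 1179 * (k : ℤ) ^ 2 + 564 * (k : ℤ)
      [ZMOD 3 ^ 7]) ∧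
    ((1 + 3 ^ (2 * k + 1)) * S (2 * k + 1) ≡
      324 * (k : ℤ) ^ 6 + 2106 * (k : ℤ) ^ 5 + 1809 * (k : ℤ) ^ 4
        + 1197 * (k : ℤ) ^ 3 + 549 * (k : ℤ) ^ 2 + 888 * (k : ℤ) + 2183
      [ZMOD 3 ^ 7]) :=
  let h : SRecurrence S := ⟨hS0, hS⟩
  ⟨h.modEq_even k, h.modEq_odd k⟩
end

section
/- Let n be a nonnegative integer and let a be a nonzero integer. Then E_n^{(a)} = ∑_{k=0}^{⌊n/2⌋} C(n,2k) (1-a)^{n-2k} a^{2k} E_{2k}, where E_{2k} denotes the Euler numbers. -/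
/-!
Read through exponential generating functions, `binomConv` is multiplication, so it is associative
with unit `Pi.single 0 1`. With `C = evenPart (a ^ ·)`, the coefficients of `cosh (a t)`, the
defining relation of `E^{(a)}` says `C ⋆ E^{(a)} = fun m ↦ (1 - a) ^ m`, and the Euler relation says
`Ẽ ⋆ C = Pi.single 0 1` for `Ẽ = evenPart fun m ↦ a ^ m * E m`, the coefficients of `sech (a t)`.
Hence `E^{(a)} = (Ẽ ⋆ C) ⋆ E^{(a)} = Ẽ ⋆ (fun m ↦ (1 - a) ^ m)`, which is the claimed sum.
-/

open Finset

variable {R : Type*} [CommSemiring R]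

def binomConv (f g : ℕ → R) (n : ℕ) : R :=
  ∑ x ∈ antidiagonal n, n.choose x.1 * f x.1 * g x.2

def evenPart (f : ℕ → R) (n : ℕ) : R :=
  if Even n then f n else 0

theorem binomConv_assoc (f g h : ℕ → R) :
    binomConv (binomConv f g) h = binomConv f (binomConv g h) := by
  ext n
  simp only [binomConv, sum_mul, mul_sum, sum_sigma']
  apply sum_nbij' (fun x ↦ ⟨(x.2.1, x.2.2 + x.1.2), (x.2.2, x.1.2)⟩)
    (fun x ↦ ⟨(x.1.1 + x.2.1, x.2.2), (x.1.1, x.2.1)⟩)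
  case h =>
    rintro ⟨⟨p, q⟩, ⟨i, j⟩⟩ hx
    simp only [mem_sigma, HasAntidiagonal.mem_antidiagonal] at hx
    obtain ⟨rfl, rfl⟩ := hx
    have hchoose : (i + j + q).choose (i + j) * (i + j).choose i
        = (i + j + q).choose i * (j + q).choose j := by
      rw [Nat.choose_mul (by omega)]
      congr 2 <;> omega
    calc _ = (((i + j + q).choose (i + j) * (i + j).choose i : ℕ) : R) * (f i * g j * h q) := by
          push_cast; ring
      _ = _ := by rw [hchoose]; push_cast; ring
  all_goals
    rintro ⟨⟨p, q⟩, ⟨i, j⟩⟩ hx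
    simp only [mem_sigma, HasAntidiagonal.mem_antidiagonal,
      Sigma.mk.injEq, Prod.mk.injEq, heq_eq_eq, and_true, true_and] at hx ⊢
    omega

theorem binomConv_single_left (f : ℕ → R) : binomConv (Pi.single 0 1) f = f := by
  ext n
  rw [binomConv, sum_eq_single (0, n)]
  · simp
  · rintro ⟨_ | p, q⟩ hx hne
    · simp_all
    · simp
  · simp

theorem sum_range_ite_even {M : Type*} [AddCommMonoid M] (f : ℕ → M) (n : ℕ) :
    ∑ k ∈ range (n + 1), (if Even k then f k else 0) = ∑ i ∈ range (n / 2 + 1), f (2 * i) := by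
  rw [← sum_filter]
  symm
  apply sum_nbij' (2 * ·) (· / 2)
  · intro i hi
    simp only [mem_filter, mem_range] at hi ⊢
    exact ⟨by omega, even_two_mul i⟩
  · intro k hk
    simp only [mem_filter, mem_range] at hk ⊢
    omega
  · intro i _
    simp
  · intro k hk
    simp only [mem_filter, mem_range] at hk
    exact Nat.two_mul_div_two_of_even hk.2
  · intro i _
    rfl

theorem binomConv_evenPart_left (f g : ℕ → R) (n : ℕ) :
    binomConv (evenPart f) g n =
      ∑ i ∈ range (n / 2 + 1), n.choose (2 * i) * f (2 * i) * g (n - 2 * i) := by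
  rw [binomConv, Nat.sum_antidiagonal_eq_sum_range_succ (fun p q ↦ n.choose p * evenPart f p * g q),
    ← sum_range_ite_even (fun k ↦ (n.choose k : R) * f k * g (n - k))]
  refine sum_congr rfl fun k _ ↦ ?_
  unfold evenPart
  split_ifs <;> simp

theorem binomConv_evenPart_eq_single {E : ℕ → R} (hE0 : E 0 = 1)
    (hE : ∀ n : ℕ, 1 ≤ n → ∑ r ∈ range (n + 1), ((2 * n).choose (2 * r) : R) * E (2 * r) = 0)
    (c : R) :
    binomConv (evenPart fun m ↦ c ^ m * E m) (evenPart (c ^ ·)) = Pi.single 0 1 := by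
  ext n
  rw [binomConv_evenPart_left]
  obtain ⟨m, rfl | rfl⟩ := Nat.even_or_odd' n
  · have hterm : ∀ i ∈ range (2 * m / 2 + 1),
        ((2 * m).choose (2 * i) : R) * (c ^ (2 * i) * E (2 * i)) * evenPart (c ^ ·) (2 * m - 2 * i)
          = c ^ (2 * m) * (((2 * m).choose (2 * i) : R) * E (2 * i)) := by
      intro i hi
      rw [mem_range] at hi
      have hsub : 2 * m - 2 * i = 2 * (m - i) := by omega
      rw [evenPart, if_pos (hsub ▸ even_two_mul _), ← pow_mul_pow_sub c (by omega : 2 * i ≤ 2 * m)]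
      ring
    rw [sum_congr rfl hterm, ← mul_sum, Nat.mul_div_cancel_left m two_pos]
    rcases Nat.eq_zero_or_pos m with rfl | hm
    · simp [hE0]
    · rw [hE m hm, mul_zero, Pi.single_eq_of_ne (by omega)]
  · rw [Pi.single_eq_of_ne (by omega)]
    refine sum_eq_zero fun i hi ↦ ?_
    rw [mem_range] at hi
    have hodd : ¬Even (2 * m + 1 - 2 * i) := by
      rw [Nat.not_even_iff_odd]; exact ⟨m - i, by omega⟩
    rw [evenPart, if_neg hodd, mul_zero]

theorem stmt_14_general (a : ℤ)
    (Ea : ℕ → ℤ)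
    (hEa : ∀ n : ℕ, ∑ i ∈ Finset.range (n / 2 + 1),
      (n.choose (2 * i) : ℤ) * a ^ (2 * i) * Ea (n - 2 * i) = (1 - a) ^ n)
    (E : ℕ → ℤ) (hE0 : E 0 = 1)
    (hEsum : ∀ n : ℕ, 1 ≤ n →
      ∑ r ∈ Finset.range (n + 1), ((2 * n).choose (2 * r) : ℤ) * E (2 * r) = 0)
    (n : ℕ) :
    Ea n = ∑ i ∈ Finset.range (n / 2 + 1),
      (n.choose (2 * i) : ℤ) * (1 - a) ^ (n - 2 * i) * a ^ (2 * i) * E (2 * i) := by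
  have hcosh : binomConv (evenPart (a ^ ·)) Ea = ((1 - a) ^ ·) :=
    funext fun m ↦ (binomConv_evenPart_left _ _ m).trans (hEa m)
  calc Ea n = binomConv (Pi.single 0 1) Ea n := by rw [binomConv_single_left]
    _ = binomConv (binomConv (evenPart fun m ↦ a ^ m * E m) (evenPart (a ^ ·))) Ea n := by
      rw [binomConv_evenPart_eq_single hE0 hEsum]
    _ = binomConv (evenPart fun m ↦ a ^ m * E m) ((1 - a) ^ ·) n := by
      rw [binomConv_assoc, hcosh]
    _ = _ := by
      rw [binomConv_evenPart_left]
      exact sum_congr rfl fun i _ ↦ by ring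

/-- Lemma 2.1: `E_n^{(a)} = ∑_{k=0}^{⌊n/2⌋} C(n,2k) (1-a)^{n-2k} a^{2k} E_{2k}`,
where `E_{2k}` are the Euler numbers. -/
theorem stmt_14 (a : ℤ) (ha : a ≠ 0)
    (Ea : ℕ → ℤ)
    (hEa : ∀ n : ℕ, ∑ i ∈ Finset.range (n / 2 + 1),
      (n.choose (2 * i) : ℤ) * a ^ (2 * i) * Ea (n - 2 * i) = (1 - a) ^ n)
    (E : ℕ → ℤ) (hE0 : E 0 = 1)
    (hEodd : ∀ n : ℕ, 1 ≤ n → E (2 * n - 1) = 0)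
    (hEsum : ∀ n : ℕ, 1 ≤ n →
      ∑ r ∈ Finset.range (n + 1), ((2 * n).choose (2 * r) : ℤ) * E (2 * r) = 0)
    (n : ℕ) :
    Ea n = ∑ i ∈ Finset.range (n / 2 + 1),
      (n.choose (2 * i) : ℤ) * (1 - a) ^ (n - 2 * i) * a ^ (2 * i) * E (2 * i) :=
  stmt_14_general a Ea hEa E hE0 hEsum n
end

section
/- Let a be a nonzero integer, let n be a positive integer, let b be a nonnegative integer, and let α_n be the unique positive integer with 2^{α_n - 1} ≤ n < 2^{α_n}. Then ∑_{k=0}^{n} C(n,k) (-1)^k E_{2k+b}^{(a)} ≡ 0 (mod 2^{(2 + ord_2(a))·n - α_n}). -/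
/-!
Let `L : ℤ[X] → ℤ` be the linear functional `X ^ k ↦ E k`. The defining relation says
`L (q (X + a) + q (X - a)) = 2 q (1 - a)` for every `q`; for `q = (X + a - 1) ^ m` it shows that the
forward differences `d m = L ((X - 1) ^ m)` satisfy `2 d m = -∑_{j ≥ 1} C(m, j) (2a) ^ j d (m - j)`,
hence `2 ^ (m ord₂ a + ord₂ m!) ∣ d m`. The sum in question is `L (X ^ b (1 - X ^ 2) ^ n)`, which,
expanded in powers of `X - 1`, is `±∑ c m d m` with `c m` the coefficient of `Y ^ m` in
`Y ^ n (Y + 2) ^ n (Y + 1) ^ b`: it vanishes for `m < n` and is divisible by `2 ^ (2n - m)`.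
Legendre's formula `ord₂ m! = m - s₂ m` and the bound `2 ^ s₂ m ≤ m + 1` on the binary digit sum
finish the estimate of the exponents.
-/

open Finset Polynomial
open scoped Nat

namespace EulerCongruence

theorem padicValNat_factorial_eq_choose_add {p m j : ℕ} [Fact p.Prime] (h : j ≤ m) :
    padicValNat p m ! =
      padicValNat p (m.choose j) + padicValNat p j ! + padicValNat p (m - j)! := by
  rw [← Nat.choose_mul_factorial_mul_factorial h, padicValNat.mul, padicValNat.mul] <;>
    positivity [Nat.choose_pos h]

theorem two_pow_digits_sum_le (m : ℕ) : 2 ^ (Nat.digits 2 m).sum ≤ m + 1 := by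
  induction m using Nat.strong_induction_on with
  | _ m ih =>
    rcases m.eq_zero_or_pos with rfl | hm
    · simp
    have := ih (m / 2) (Nat.div_lt_self hm one_lt_two)
    rw [Nat.digits_def' one_lt_two hm, List.sum_cons, pow_add]
    rcases Nat.mod_two_eq_zero_or_one m with h | h <;> rw [h] <;> omega

theorem two_pow_sub_padicValNat_factorial_le (m : ℕ) : 2 ^ (m - padicValNat 2 m !) ≤ m + 1 := by
  have := sub_one_mul_padicValNat_factorial (p := 2) m
  have := Nat.digit_sum_le 2 m
  rw [show m - padicValNat 2 m ! = (Nat.digits 2 m).sum by omega]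
  exact two_pow_digits_sum_le m

theorem two_pow_dvd_of_recurrence {c : ℤ} {v : ℕ} (hc : 2 ^ (v + 1) ∣ c) {d : ℕ → ℤ}
    (hd : ∀ m, 0 < m → d m + ∑ j ∈ range (m + 1), c ^ j * d (m - j) * m.choose j = 0) (m : ℕ) :
    2 ^ (m * v + padicValNat 2 m !) ∣ d m := by
  induction m using Nat.strong_induction_on with
  | _ m ih =>
    rcases m.eq_zero_or_pos with rfl | hm
    · simp
    have hterm : ∀ j ∈ range m,
        2 ^ (m * v + padicValNat 2 m ! + 1) ∣ c ^ (j + 1) * d (m - (j + 1)) * m.choose (j + 1) := by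
      intro j hj
      obtain ⟨k, rfl⟩ := Nat.exists_eq_add_of_le (mem_range.mp hj)
      rw [Nat.add_sub_cancel_left]
      have hcj : 2 ^ ((v + 1) * (j + 1)) ∣ c ^ (j + 1) :=
        pow_mul (2 : ℤ) .. ▸ pow_dvd_pow_of_dvd hc _
      have hchoose : (2 : ℤ) ^ padicValNat 2 ((j + 1 + k).choose (j + 1)) ∣
          (j + 1 + k).choose (j + 1) := by
        exact_mod_cast pow_padicValNat_dvd
      have hval := padicValNat_factorial_eq_choose_add (p := 2) (Nat.le_add_right (j + 1) k)
      rw [Nat.add_sub_cancel_left] at hval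
      -- the extra factor `2` comes from `ord₂ (j + 1)! < j + 1`
      have hlt := padicValNat_factorial_lt_of_ne_zero 2 j.succ_ne_zero
      have hprod := mul_dvd_mul (mul_dvd_mul hcj (ih k (by omega))) hchoose
      rw [← pow_add, ← pow_add] at hprod
      refine (pow_dvd_pow 2 ?_).trans hprod
      linarith
    have htwice : 2 ^ (m * v + padicValNat 2 m ! + 1) ∣ d m * 2 := by
      have hrec := hd m hm
      rw [sum_range_succ', Nat.choose_zero_right, pow_zero, Nat.sub_zero] at hrec
      rw [show d m * 2 = -∑ j ∈ range m, c ^ (j + 1) * d (m - (j + 1)) * m.choose (j + 1) by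
        push_cast at hrec; linarith]
      exact (dvd_sum hterm).neg_right
    rw [pow_succ] at htwice
    exact (mul_dvd_mul_iff_right two_ne_zero).mp htwice

theorem sum_range_eq_sum_range_even {M : Type*} [AddCommMonoid M] {f : ℕ → M}
    (hf : ∀ k, Odd k → f k = 0) (p : ℕ) :
    ∑ k ∈ range (p + 1), f k = ∑ i ∈ range (p / 2 + 1), f (2 * i) := by
  rw [← sum_image (g := (2 * ·)) fun _ _ _ _ h => by simpa using h]
  refine (sum_subset (fun k hk => ?_) fun k hk hk' => hf k ?_).symm
  · obtain ⟨i, hi, rfl⟩ := mem_image.mp hk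
    simp only [mem_range] at hi ⊢
    omega
  · simp only [mem_range, mem_image, not_exists, not_and] at hk hk'
    exact Nat.not_even_iff_odd.mp fun ⟨i, hi⟩ => hk' i (by omega) (by omega)

section Umbral

variable (E : ℕ → ℤ)

def umbral : ℤ[X] →ₗ[ℤ] ℤ := lsum fun k => LinearMap.toSpanSingleton ℤ ℤ (E k)

theorem umbral_C_mul_X_pow (c : ℤ) (k : ℕ) : umbral E (C c * X ^ k) = c * E k := by
  rw [C_mul_X_pow_eq_monomial, umbral, lsum_apply]
  simp

theorem umbral_X_pow (k : ℕ) : umbral E (X ^ k) = E k := by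
  simpa using umbral_C_mul_X_pow E 1 k

theorem umbral_C_mul (c : ℤ) (q : ℤ[X]) : umbral E (C c * q) = c * umbral E q := by
  rw [C_mul', map_smul, smul_eq_mul]

theorem umbral_comp (q r : ℤ[X]) :
    umbral E (q.comp r) = q.sum fun m c => c * umbral E (r ^ m) := by
  simp only [comp_eq_sum_left, Polynomial.sum_def, map_sum, umbral_C_mul]

theorem umbral_C_add_pow (c : ℤ) (r : ℤ[X]) (m : ℕ) :
    umbral E ((C c + r) ^ m) =
      ∑ j ∈ range (m + 1), c ^ j * umbral E (r ^ (m - j)) * m.choose j := by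
  rw [add_pow, map_sum]
  refine sum_congr rfl fun j _ => ?_
  rw [← C_pow, ← C_eq_natCast, mul_comm, ← mul_assoc, ← C_mul, umbral_C_mul]
  ring

end Umbral

def IsGeneralizedEuler (a : ℤ) (E : ℕ → ℤ) : Prop :=
  ∀ n : ℕ, ∑ i ∈ range (n / 2 + 1), (n.choose (2 * i) : ℤ) * a ^ (2 * i) * E (n - 2 * i) =
    (1 - a) ^ n

section GeneralizedEuler

variable {a : ℤ} {E : ℕ → ℤ}

theorem IsGeneralizedEuler.umbral_C_add_pow_add (hE : IsGeneralizedEuler a E) (p : ℕ) :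
    umbral E ((C a + X) ^ p + (C (-a) + X) ^ p) = 2 * (1 - a) ^ p := by
  rw [map_add, umbral_C_add_pow, umbral_C_add_pow, ← sum_add_distrib, ← hE p, mul_sum,
    sum_range_eq_sum_range_even (fun k hk => by rw [hk.neg_pow]; ring)]
  refine sum_congr rfl fun i _ => ?_
  rw [(even_two_mul i).neg_pow, umbral_X_pow]
  ring

theorem IsGeneralizedEuler.umbral_comp_add_comp (hE : IsGeneralizedEuler a E) (q : ℤ[X]) :
    umbral E (q.comp (C a + X) + q.comp (C (-a) + X)) = 2 * q.eval (1 - a) := by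
  induction q using Polynomial.induction_on' with
  | add p q hp hq =>
    rw [add_comp, add_comp, add_add_add_comm, map_add, hp, hq, eval_add, mul_add]
  | monomial k c =>
    rw [monomial_comp, monomial_comp, ← mul_add, umbral_C_mul, hE.umbral_C_add_pow_add,
      eval_monomial]
    ring

theorem IsGeneralizedEuler.umbral_pow_recurrence (hE : IsGeneralizedEuler a E) {m : ℕ}
    (hm : 0 < m) :
    umbral E ((C (-1) + X) ^ m) +
      ∑ j ∈ range (m + 1), (2 * a) ^ j * umbral E ((C (-1) + X) ^ (m - j)) * m.choose j = 0 := by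
  have hkey := hE.umbral_comp_add_comp ((C (a - 1) + X) ^ m)
  have hshift : ((C (a - 1) + X) ^ m).comp (C a + X) = (C (2 * a) + (C (-1) + X)) ^ m := by
    rw [pow_comp, add_comp, C_comp, X_comp]
    simp only [map_sub, map_mul, map_neg, map_one, map_ofNat]
    ring
  have hcancel : ((C (a - 1) + X) ^ m).comp (C (-a) + X) = (C (-1) + X) ^ m := by
    rw [pow_comp, add_comp, C_comp, X_comp]
    simp only [map_sub, map_neg, map_one]
    ring
  rw [hshift, hcancel, map_add, umbral_C_add_pow, eval_pow, eval_add, eval_C, eval_X,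
    show a - 1 + (1 - a) = 0 by ring, zero_pow hm.ne', mul_zero] at hkey
  linarith

end GeneralizedEuler

theorem sub_padicValNat_factorial_lt {m t : ℕ} (h : m + 1 < 2 ^ t) : m - padicValNat 2 m ! < t :=
  (Nat.pow_lt_pow_iff_right one_lt_two).mp ((two_pow_sub_padicValNat_factorial_le m).trans_lt h)

theorem two_add_mul_sub_le {n m α : ℕ} (v : ℕ) (hα : n < 2 ^ α)
    (hm : n ≤ m) : (2 + v) * n - α ≤ (n - (m - n)) + (m * v + padicValNat 2 m !) := by
  have hv : n * v ≤ m * v := Nat.mul_le_mul_right v hm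
  rw [show (2 + v) * n = 2 * n + n * v by ring]
  rcases lt_or_ge m (2 * n) with h | h
  · have := sub_padicValNat_factorial_lt (m := m) (t := α + 1) (by rw [pow_succ]; omega)
    omega
  · have hdouble := padicValNat_factorial_mul (p := 2) n
    have hmono : padicValNat 2 (2 * n)! ≤ padicValNat 2 m ! :=
      (padicValNat_dvd_iff_le m.factorial_ne_zero).mp
        (pow_padicValNat_dvd.trans (Nat.factorial_dvd_factorial h))
    have := sub_padicValNat_factorial_lt (m := n) (t := α + 1) (by rw [pow_succ]; omega)
    omega

theorem pow_sub_dvd_coeff_X_add_C_pow_mul {R : Type*} [CommSemiring R] (c : R) (n : ℕ) (Q : R[X])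
    (j : ℕ) : c ^ (n - j) ∣ ((X + C c) ^ n * Q).coeff j := by
  rw [coeff_mul]
  refine dvd_sum fun ik hik => ?_
  rw [coeff_X_add_C_pow, mul_assoc]
  exact (pow_dvd_pow c (by have := mem_antidiagonal.mp hik; omega)).mul_right _

theorem sum_choose_mul_neg_one_pow_mul_X_pow (n b : ℕ) :
    ∑ k ∈ range (n + 1), C ((n.choose k : ℤ) * (-1) ^ k) * X ^ (2 * k + b) =
      C ((-1) ^ n) * (X ^ n * ((X + C 2) ^ n * (X + 1) ^ b) : ℤ[X]).comp (C (-1) + X) := by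
  have hlhs : ∑ k ∈ range (n + 1), C ((n.choose k : ℤ) * (-1) ^ k) * X ^ (2 * k + b) =
      X ^ b * (-X ^ 2 + 1) ^ n := by
    rw [add_pow, mul_sum]
    refine sum_congr rfl fun k _ => ?_
    simp only [map_mul, map_pow, map_neg, map_one, C_eq_natCast, one_pow, mul_one]
    ring
  rw [hlhs, mul_comp, mul_comp, X_pow_comp, pow_comp, pow_comp, add_comp, add_comp, X_comp,
    C_comp, one_comp]
  simp only [map_neg, map_one, map_pow, map_ofNat]
  rw [show (-X ^ 2 + 1 : ℤ[X]) = -1 * (-1 + X) * (-1 + X + 2) by ring, mul_pow, mul_pow]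
  ring

end EulerCongruence

open EulerCongruence in
theorem stmt_16_general (a : ℤ)
    (E : ℕ → ℤ)
    (hE : ∀ n : ℕ, ∑ i ∈ Finset.range (n / 2 + 1),
      (n.choose (2 * i) : ℤ) * a ^ (2 * i) * E (n - 2 * i) = (1 - a) ^ n)
    (n : ℕ) (b : ℕ) (α : ℕ)
    (hα : 2 ^ (α - 1) ≤ n ∧ n < 2 ^ α) :
    (2 : ℤ) ^ ((2 + padicValInt 2 a) * n - α) ∣
      ∑ i ∈ Finset.range (n + 1), (n.choose i : ℤ) * (-1) ^ i * E (2 * i + b) := by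
  have hc : (2 : ℤ) ^ (padicValInt 2 a + 1) ∣ 2 * a := by
    rw [pow_succ']
    exact mul_dvd_mul_left 2 (by exact_mod_cast padicValInt_dvd a)
  have hE : IsGeneralizedEuler a E := hE
  have hdiff := two_pow_dvd_of_recurrence hc fun _ hm => hE.umbral_pow_recurrence hm
  have humbral : ∑ i ∈ range (n + 1), (n.choose i : ℤ) * (-1) ^ i * E (2 * i + b) =
      umbral E (∑ k ∈ range (n + 1), C ((n.choose k : ℤ) * (-1) ^ k) * X ^ (2 * k + b)) := by
    simp only [map_sum, umbral_C_mul_X_pow]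
  rw [humbral, sum_choose_mul_neg_one_pow_mul_X_pow, umbral_C_mul, umbral_comp, Polynomial.sum_def]
  refine (dvd_sum fun m _ => ?_).mul_left _
  rw [coeff_X_pow_mul']
  split_ifs with hm
  · refine (pow_dvd_pow 2 (two_add_mul_sub_le _ hα.2 hm)).trans ?_
    rw [pow_add]
    exact mul_dvd_mul (pow_sub_dvd_coeff_X_add_C_pow_mul 2 n _ _) (hdiff m)
  · rw [zero_mul]
    exact dvd_zero _

/-- Lemma 2.2(ii): `∑_{k=0}^n C(n,k)(-1)^k E_{2k+b}^{(a)} ≡ 0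
(mod 2^{(2+ord_2 a)n - α_n})`. -/
theorem stmt_16 (a : ℤ) (ha : a ≠ 0)
    (E : ℕ → ℤ)
    (hE : ∀ n : ℕ, ∑ i ∈ Finset.range (n / 2 + 1),
      (n.choose (2 * i) : ℤ) * a ^ (2 * i) * E (n - 2 * i) = (1 - a) ^ n)
    (n : ℕ) (hn : 0 < n) (b : ℕ) (α : ℕ) (hα1 : 0 < α)
    (hα : 2 ^ (α - 1) ≤ n ∧ n < 2 ^ α) :
    (2 : ℤ) ^ ((2 + padicValInt 2 a) * n - α) ∣
      ∑ i ∈ Finset.range (n + 1), (n.choose i : ℤ) * (-1) ^ i * E (2 * i + b) :=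
  stmt_16_general a E hE n b α hα
end

section
/- Let p be an odd prime and let b be a nonnegative integer. Then the function f : ℕ → ℚ defined by f(k) = (1 - (p/3) · p^{k(p-1)+b}) U_{k(p-1)+b}, where (p/3) is the Legendre symbol of p modulo 3, is a p-regular function. -/
/-!
The exponential generating function of `U` is `1 / (eˣ + e⁻ˣ - 1)`. For odd `K` the identity
`(y + y⁻¹ - 1) ∑_{m<3K} ψ(m) yᵐ = 1 + y^{3K}` at `y = eˣ` gives
`U_n + ∑_j C(n,j) (3K)^j U_{n-j} = ∑_{m<3K} ψ(m) mⁿ`, hence `∑_{m<3K} ψ(m) mⁿ ≡ 2 U_n (mod K)`.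
Comparing `K = pⁿ` with `K = pⁿ⁺¹` and using `ψ(pm) = (p/3) ψ(m)` on the multiples of `p` gives
`2 (1 - (p/3) p^N) U_N ≡ ∑_{m<3pⁿ⁺¹, p∤m} ψ(m) m^N (mod pⁿ)`. For `N = k(p-1)+b` the
alternating binomial sum over `k` of the right-hand side is `∑ ψ(m) m^b (1 - m^{p-1})ⁿ`,
which Fermat's little theorem makes divisible by `pⁿ`.
-/

open Finset PowerSeries
open scoped Nat

-- `psi` takes the values `0, 1, 1, 0, -1, -1` on `m ≡ 0, …, 5 (mod 6)`.
def psi (m : ℕ) : ℤ := (-1) ^ (m + 1) * legendreSym 3 m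

lemma psi_three_mul (K : ℕ) : psi (3 * K) = 0 := by
  rw [psi, legendreSym.mod]
  simp

lemma psi_three_mul_add_one (K : ℕ) : psi (3 * K + 1) = (-1) ^ K := by
  rw [psi, legendreSym.mod]
  push_cast
  rw [show (3 * (K : ℤ) + 1) % 3 = 1 by omega, legendreSym.at_one, pow_succ, pow_succ, pow_mul]
  norm_num

lemma psi_three_mul_add_two (K : ℕ) : psi (3 * K + 2) = (-1) ^ K := by
  rw [psi, legendreSym.mod]
  push_cast
  rw [show (3 * (K : ℤ) + 2) % 3 = 2 by omega, show legendreSym 3 2 = -1 by decide, pow_succ,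
    pow_add, pow_mul]
  norm_num

lemma psi_mul_of_odd {p : ℕ} (hp : Odd p) (m : ℕ) : psi (p * m) = legendreSym 3 p * psi m := by
  have hsign : (-1 : ℤ) ^ (p * m + 1) = (-1) ^ (m + 1) := by
    rw [pow_succ, pow_succ, pow_mul, hp.neg_one_pow]
  simp only [psi, hsign, Nat.cast_mul, legendreSym.mul]
  ring

lemma sum_psi_mul_pow_mul_add_sub_one {R : Type*} [CommRing R] {y y' : R} (hy : y * y' = 1)
    (K : ℕ) :
    (∑ m ∈ range (3 * K), (psi m : R) * y ^ m) * (y + y' - 1) = 1 - (-1) ^ K * y ^ (3 * K) := by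
  induction K with
  | zero => simp
  | succ K ih =>
    rw [show 3 * (K + 1) = 3 * K + 2 + 1 by ring, sum_range_succ, sum_range_succ, sum_range_succ,
      psi_three_mul, psi_three_mul_add_one, psi_three_mul_add_two]
    push_cast
    linear_combination ih + (-1) ^ K * y ^ (3 * K) * (1 + y) * hy

lemma sum_range_two_mul_one_add_neg_one_pow {R : Type*} [CommRing R] (g : ℕ → R) (m : ℕ) :
    ∑ j ∈ range (2 * m), (1 + (-1) ^ j) * g j = 2 * ∑ i ∈ range m, g (2 * i) := by
  induction m with
  | zero => simp
  | succ m ih =>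
    rw [show 2 * (m + 1) = 2 * m + 1 + 1 by ring, sum_range_succ, sum_range_succ, ih,
      sum_range_succ, pow_succ, pow_mul]
    norm_num
    ring

lemma sum_choose_mul_one_add_neg_one_pow {R : Type*} [CommRing R] (g : ℕ → R) (n : ℕ) :
    ∑ j ∈ range (n + 1), n.choose j * (1 + (-1) ^ j) * g (n - j) =
      2 * ∑ i ∈ range (n / 2 + 1), n.choose (2 * i) * g (n - 2 * i) := by
  rw [← sum_range_two_mul_one_add_neg_one_pow (fun j => (n.choose j : R) * g (n - j)),
    ← sum_subset (range_subset_range.mpr (by omega : n + 1 ≤ 2 * (n / 2 + 1))) fun j hj hjn => ?_]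
  · exact sum_congr rfl fun j _ => by ring
  · rw [Nat.choose_eq_zero_of_lt (by simp at hj hjn; omega)]
    simp

lemma sum_choose_mul_neg_one_pow_mul_pow {R : Type*} [CommRing R] (x : R) (n : ℕ) :
    ∑ i ∈ range (n + 1), n.choose i * (-1) ^ i * x ^ i = (1 - x) ^ n := by
  rw [sub_eq_neg_add, add_pow]
  exact sum_congr rfl fun i _ => by ring

def egf (f : ℕ → ℚ) : ℚ⟦X⟧ := mk fun n => f n / n !

lemma coeff_egf_mul_factorial (f : ℕ → ℚ) (n : ℕ) : coeff n (egf f) * n ! = f n := by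
  rw [egf, coeff_mk, div_mul_cancel₀ _ (by positivity)]

lemma coeff_rescale_exp_mul_egf_mul_factorial (c : ℚ) (f : ℕ → ℚ) (n : ℕ) :
    coeff n (rescale c (exp ℚ) * egf f) * n ! =
      ∑ j ∈ range (n + 1), n.choose j * c ^ j * f (n - j) := by
  rw [coeff_mul, Nat.sum_antidiagonal_eq_sum_range_succ
    (fun i j => coeff i (rescale c (exp ℚ)) * coeff j (egf f)), sum_mul]
  refine sum_congr rfl fun j hj => ?_
  have hjn : j ≤ n := Nat.lt_succ_iff.mp (mem_range.mp hj)
  simp only [coeff_rescale, coeff_exp, egf, coeff_mk, Algebra.algebraMap_self, RingHom.id_apply,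
    Nat.cast_choose ℚ hjn]
  field_simp

section Recurrence

variable {U : ℕ → ℤ}

lemma two_mul_sum_choose_two_mul (hU0 : U 0 = 1)
    (hU : ∀ n : ℕ, 1 ≤ n →
      U n = -2 * ∑ i ∈ Icc 1 (n / 2), (n.choose (2 * i) : ℤ) * U (n - 2 * i)) (n : ℕ) :
    2 * ∑ i ∈ range (n / 2 + 1), (n.choose (2 * i) : ℤ) * U (n - 2 * i) =
      U n + if n = 0 then 1 else 0 := by
  rcases Nat.eq_zero_or_pos n with rfl | hn
  · simp [hU0]
  · rw [range_eq_Ico, sum_eq_sum_Ico_succ_bot (Nat.succ_pos _), if_neg hn.ne']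
    simp only [Nat.succ_eq_add_one, zero_add, Ico_add_one_right_eq_Icc, mul_zero,
      Nat.choose_zero_right, Nat.sub_zero, Nat.cast_one, one_mul]
    linarith [hU n hn]

lemma exp_add_exp_neg_sub_one_mul_egf (hU0 : U 0 = 1)
    (hU : ∀ n : ℕ, 1 ≤ n →
      U n = -2 * ∑ i ∈ Icc 1 (n / 2), (n.choose (2 * i) : ℤ) * U (n - 2 * i)) :
    (exp ℚ + rescale (-1) (exp ℚ) - 1) * egf (fun n => U n) = 1 := by
  ext n
  rw [← mul_left_inj' (by positivity : (n ! : ℚ) ≠ 0)]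
  have hplus := coeff_rescale_exp_mul_egf_mul_factorial 1 (fun n => U n) n
  rw [rescale_one, RingHom.id_apply] at hplus
  have hsum : ∑ j ∈ range (n + 1), (n.choose j * 1 ^ j * (U (n - j) : ℚ) +
      n.choose j * (-1) ^ j * U (n - j)) = U n + if n = 0 then 1 else 0 := by
    rw [(sum_congr rfl fun j _ => by ring).trans
      (sum_choose_mul_one_add_neg_one_pow (fun m => (U m : ℚ)) n)]
    exact_mod_cast two_mul_sum_choose_two_mul hU0 hU n
  rw [sub_mul, add_mul, map_sub, map_add, sub_mul, add_mul, hplus,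
    coeff_rescale_exp_mul_egf_mul_factorial, ← sum_add_distrib, hsum, one_mul,
    coeff_egf_mul_factorial, coeff_one]
  split_ifs with h <;> simp [h]

end Recurrence

section GeneratingFunction

variable {U : ℕ → ℚ}

lemma one_add_exp_pow_mul_egf (hU : (exp ℚ + rescale (-1) (exp ℚ) - 1) * egf U = 1) {K : ℕ}
    (hK : Odd K) :
    (1 + exp ℚ ^ (3 * K)) * egf U = ∑ m ∈ range (3 * K), (psi m : ℚ⟦X⟧) * exp ℚ ^ m := by
  have hy : exp ℚ * rescale (-1) (exp ℚ) = 1 := by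
    simpa using exp_mul_exp_eq_exp_add (1 : ℚ) (-1)
  have h := sum_psi_mul_pow_mul_add_sub_one hy K
  rw [hK.neg_one_pow] at h
  linear_combination (-egf U) * h + (∑ m ∈ range (3 * K), (psi m : ℚ⟦X⟧) * exp ℚ ^ m) * hU

lemma sum_psi_mul_pow (hU : (exp ℚ + rescale (-1) (exp ℚ) - 1) * egf U = 1) {K : ℕ}
    (hK : Odd K) (n : ℕ) :
    ∑ m ∈ range (3 * K), (psi m : ℚ) * m ^ n =
      U n + ∑ j ∈ range (n + 1), n.choose j * ((3 * K : ℕ) : ℚ) ^ j * U (n - j) := by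
  have h := congrArg (fun F : ℚ⟦X⟧ => coeff n F * (n ! : ℚ)) (one_add_exp_pow_mul_egf hU hK)
  simp only [add_mul, one_mul, map_add, exp_pow_eq_rescale_exp,
    coeff_rescale_exp_mul_egf_mul_factorial, coeff_egf_mul_factorial] at h
  rw [h, map_sum, sum_mul]
  refine sum_congr rfl fun m _ => ?_
  rw [← map_intCast (C (R := ℚ)), coeff_C_mul, coeff_rescale, coeff_exp, Algebra.algebraMap_self,
    RingHom.id_apply]
  field_simp

end GeneratingFunction

lemma sum_range_mul_eq_sum_filter_add {M : Type*} [AddCommMonoid M] {p : ℕ} (hp : 0 < p)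
    (K : ℕ) (f : ℕ → M) :
    ∑ m ∈ range (p * K), f m =
      ∑ m ∈ (range (p * K)).filter (¬ p ∣ ·), f m + ∑ j ∈ range K, f (p * j) := by
  rw [← sum_filter_not_add_sum_filter _ (p ∣ ·)]
  congr 1
  refine sum_nbij' (· / p) (p * ·) (fun a ha => ?_) (fun a ha => ?_) (fun a ha => ?_)
    (fun a _ => Nat.mul_div_cancel_left a hp) (fun a ha => ?_) <;>
    simp only [mem_filter, mem_range] at ha ⊢
  · exact Nat.div_lt_of_lt_mul ha.1
  · exact ⟨(Nat.mul_lt_mul_left hp).mpr ha, dvd_mul_right p a⟩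
  · exact Nat.mul_div_cancel' ha.2
  · rw [Nat.mul_div_cancel' ha.2]

lemma sum_range_mul_psi_mul_pow {p : ℕ} (hp : Odd p) (K N : ℕ) :
    ∑ m ∈ range (p * K), psi m * (m : ℤ) ^ N =
      ∑ m ∈ (range (p * K)).filter (¬ p ∣ ·), psi m * (m : ℤ) ^ N +
        legendreSym 3 p * p ^ N * ∑ j ∈ range K, psi j * (j : ℤ) ^ N := by
  rw [sum_range_mul_eq_sum_filter_add hp.pos, mul_sum]
  congr 1
  refine sum_congr rfl fun j _ => ?_
  rw [psi_mul_of_odd hp]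
  push_cast
  ring

lemma pow_dvd_sum_choose_mul_sum_pow {p : ℕ} (hp : p.Prime) {s : Finset ℕ}
    (hs : ∀ m ∈ s, ¬ p ∣ m) (w : ℕ → ℤ) (n b : ℕ) :
    (p : ℤ) ^ n ∣ ∑ i ∈ range (n + 1),
      n.choose i * (-1) ^ i * ∑ m ∈ s, w m * (m : ℤ) ^ (i * (p - 1) + b) := by
  simp_rw [mul_sum]
  rw [sum_comm]
  refine dvd_sum fun m hm => ?_
  have hcop : IsCoprime (m : ℤ) p :=
    Nat.isCoprime_iff_coprime.mpr (Nat.coprime_comm.mp (hp.coprime_iff_not_dvd.mpr (hs m hm)))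
  have hfermat : (p : ℤ) ∣ 1 - (m : ℤ) ^ (p - 1) :=
    (Int.ModEq.pow_card_sub_one_eq_one hp hcop).dvd
  have halt : ∑ i ∈ range (n + 1), n.choose i * (-1) ^ i * (w m * (m : ℤ) ^ (i * (p - 1) + b)) =
      w m * m ^ b * (1 - (m : ℤ) ^ (p - 1)) ^ n := by
    rw [← sum_choose_mul_neg_one_pow_mul_pow, mul_sum]
    exact sum_congr rfl fun i _ => by ring
  rw [halt]
  exact dvd_mul_of_dvd_right (pow_dvd_pow_of_dvd hfermat n) _

section Congruences

variable {U : ℕ → ℤ}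

lemma dvd_sum_psi_mul_pow_sub_two_mul
    (hU : (exp ℚ + rescale (-1) (exp ℚ) - 1) * egf (fun n => U n) = 1) {K : ℕ} (hK : Odd K)
    (n : ℕ) : (K : ℤ) ∣ ∑ m ∈ range (3 * K), psi m * m ^ n - 2 * U n := by
  have h : ∑ m ∈ range (3 * K), psi m * m ^ n =
      U n + ∑ j ∈ range (n + 1), n.choose j * ((3 * K : ℕ) : ℤ) ^ j * U (n - j) := by
    exact_mod_cast sum_psi_mul_pow hU hK n
  rw [h, sum_range_succ']
  simp only [Nat.choose_zero_right, pow_zero, Nat.sub_zero, Nat.cast_one, one_mul]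
  rw [show ∀ a s : ℤ, a + (s + a) - 2 * a = s from fun _ _ => by ring]
  refine dvd_sum fun j _ => Dvd.dvd.mul_right (Dvd.dvd.mul_left ?_ _) _
  exact (Dvd.intro_left 3 (by push_cast; ring)).pow j.succ_ne_zero

lemma pow_dvd_two_mul_sub_sum_filter
    (hU : (exp ℚ + rescale (-1) (exp ℚ) - 1) * egf (fun n => U n) = 1) {p : ℕ} (hp : Odd p)
    (n N : ℕ) :
    (p : ℤ) ^ n ∣ 2 * ((1 - legendreSym 3 p * p ^ N) * U N) -
      ∑ m ∈ (range (3 * p ^ (n + 1))).filter (¬ p ∣ ·), psi m * (m : ℤ) ^ N := by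
  have hS (L : ℕ) : (p : ℤ) ^ L ∣ ∑ m ∈ range (3 * p ^ L), psi m * (m : ℤ) ^ N - 2 * U N := by
    exact_mod_cast dvd_sum_psi_mul_pow_sub_two_mul hU (hp.pow (n := L)) N
  have hsieve := sum_range_mul_psi_mul_pow hp (3 * p ^ n) N
  rw [show p * (3 * p ^ n) = 3 * p ^ (n + 1) by ring] at hsieve
  have hsplit : 2 * ((1 - legendreSym 3 p * p ^ N) * U N) -
      ∑ m ∈ (range (3 * p ^ (n + 1))).filter (¬ p ∣ ·), psi m * (m : ℤ) ^ N =
      legendreSym 3 p * p ^ N * (∑ m ∈ range (3 * p ^ n), psi m * (m : ℤ) ^ N - 2 * U N) -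
        (∑ m ∈ range (3 * p ^ (n + 1)), psi m * (m : ℤ) ^ N - 2 * U N) := by
    linear_combination hsieve
  rw [hsplit]
  exact dvd_sub (dvd_mul_of_dvd_right (hS n) _) ((pow_dvd_pow _ n.le_succ).trans (hS (n + 1)))

theorem pow_dvd_sum_choose_mul_neg_one_pow_mul
    (hU : (exp ℚ + rescale (-1) (exp ℚ) - 1) * egf (fun n => U n) = 1) {p : ℕ} (hp : p.Prime)
    (hodd : Odd p) (b n : ℕ) :
    (p : ℤ) ^ n ∣ ∑ i ∈ range (n + 1), n.choose i * (-1) ^ i *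
      ((1 - legendreSym 3 p * p ^ (i * (p - 1) + b)) * U (i * (p - 1) + b)) := by
  set A : ℕ → ℤ := fun N => (1 - legendreSym 3 p * p ^ N) * U N
  set T : ℕ → ℤ := fun N =>
    ∑ m ∈ (range (3 * p ^ (n + 1))).filter (¬ p ∣ ·), psi m * (m : ℤ) ^ N
  have hsplit : 2 * ∑ i ∈ range (n + 1), n.choose i * (-1) ^ i * A (i * (p - 1) + b) =
      ∑ i ∈ range (n + 1), n.choose i * (-1) ^ i * (2 * A (i * (p - 1) + b) - T (i * (p - 1) + b)) +
        ∑ i ∈ range (n + 1), n.choose i * (-1) ^ i * T (i * (p - 1) + b) := by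
    rw [mul_sum, ← sum_add_distrib]
    exact sum_congr rfl fun _ _ => by ring
  have h2 : (p : ℤ) ^ n ∣ 2 * ∑ i ∈ range (n + 1), n.choose i * (-1) ^ i * A (i * (p - 1) + b) := by
    rw [hsplit]
    exact dvd_add
      (dvd_sum fun i _ => dvd_mul_of_dvd_right (pow_dvd_two_mul_sub_sum_filter hU hodd n _) _)
      (pow_dvd_sum_choose_mul_sum_pow hp (fun m hm => (mem_filter.mp hm).2) psi n b)
  have hcop : IsCoprime ((p : ℤ) ^ n) 2 := by
    exact_mod_cast Nat.isCoprime_iff_coprime.mpr ((Nat.coprime_two_right.mpr hodd).pow_left n)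
  exact hcop.dvd_of_dvd_mul_left h2

end Congruences

lemma pIntegral_intCast {p : ℕ} (hp : p ≠ 1) (z : ℤ) : PIntegral p z := by
  simpa [PIntegral] using hp

lemma pRegular_intCast_of_pow_dvd {p : ℕ} (hp : 1 < p) (f : ℕ → ℤ)
    (h : ∀ n, 1 ≤ n → (p : ℤ) ^ n ∣ ∑ i ∈ range (n + 1), n.choose i * (-1) ^ i * f i) :
    PRegular p (fun k => f k) := by
  refine ⟨fun k => pIntegral_intCast hp.ne' _, fun n hn => ?_⟩
  obtain ⟨c, hc⟩ := h n hn
  have hdiv : (∑ i ∈ range (n + 1), (n.choose i : ℚ) * (-1) ^ i * f i) / p ^ n = c := by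
    rw [div_eq_iff (by positivity), mul_comm]
    exact_mod_cast hc
  rw [hdiv]
  exact pIntegral_intCast hp.ne' c

/-- for an odd prime `p` and `b ≥ 0`, the function
`f(k) = (1 - (p/3) p^{k(p-1)+b}) U_{k(p-1)+b}` is a `p`-regular function. -/
theorem stmt_18 (U : ℕ → ℤ) (hU0 : U 0 = 1)
    (hU : ∀ n : ℕ, 1 ≤ n →
      U n = -2 * ∑ i ∈ Finset.Icc 1 (n / 2), (n.choose (2 * i) : ℤ) * U (n - 2 * i))
    (p : ℕ) (hp : p.Prime) (hp2 : p ≠ 2) (b : ℕ) :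
    PRegular p (fun k : ℕ =>
      ((1 - legendreSym 3 (p : ℤ) * (p : ℤ) ^ (k * (p - 1) + b) : ℤ) : ℚ) *
        (U (k * (p - 1) + b) : ℚ)) := by
  have hdvd := pow_dvd_sum_choose_mul_neg_one_pow_mul (exp_add_exp_neg_sub_one_mul_egf hU0 hU) hp
    (hp.odd_of_ne_two hp2) b
  simpa only [Int.cast_mul] using pRegular_intCast_of_pow_dvd hp.one_lt _ fun n _ => hdvd n
end
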